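/- arXiv:2105.07412 — 8 statements merged into one kernel-verified Lean document; each statement's English description precedes it below -/
import Mathlib

section
/- Let U(t) = ∫₀^∞ u(t,a) da denote the total population at time t ≥ 0, let U₀ = ∫₀^∞ u₀(a) da, and set Λ = (α/μ)·sup_{x ≥ 0} f(x) = α/(μ·e). Then for every t ≥ 0 one has U(t) ≤ exp(−μt)·U₀ + (1 − exp(−μt))·Λ. -/
open MeasureTheory Set Real

/-! Along characteristics the population only ages and dies at rate `μ`, so the individuals
older than `t` contribute exactly `e^{-μt} U₀`. Newborns are born at rate
`b = α f(·) ≤ α sup f = α / e`, and those of age `a < t` have survived with probability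
`e^{-μa}`, so they contribute at most `(α / e) ∫₀ᵗ e^{-μa} da = (1 - e^{-μt}) Λ`. -/

theorem setIntegral_Ioi_comp_sub_right {E : Type*} [NormedAddCommGroup E] [NormedSpace ℝ E]
    (g : ℝ → E) (s t : ℝ) : ∫ a in Ioi (s + t), g (a - t) = ∫ a in Ioi s, g a := by
  rw [← preimage_sub_const_Ioi]
  exact (measurePreserving_sub_right volume t).setIntegral_preimage_emb
    (measurableEmbedding_subRight t) g (Ioi s)

theorem MeasureTheory.IntegrableOn.comp_sub_right_Ioi {E : Type*} [NormedAddCommGroup E]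
    {g : ℝ → E} {s : ℝ} (hg : IntegrableOn g (Ioi s)) (t : ℝ) :
    IntegrableOn (fun a => g (a - t)) (Ioi (s + t)) := by
  rw [← preimage_sub_const_Ioi]
  exact ((measurePreserving_sub_right volume t).integrableOn_comp_preimage
    (measurableEmbedding_subRight t)).2 hg

theorem integral_exp_neg_mul {μ : ℝ} (hμ : μ ≠ 0) (t : ℝ) :
    ∫ a in (0:ℝ)..t, exp (-μ * a) = (1 - exp (-μ * t)) / μ := by
  rw [intervalIntegral.integral_comp_mul_left (fun x => exp x) (neg_ne_zero.2 hμ), integral_exp]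
  simp only [mul_zero, exp_zero, smul_eq_mul]
  field_simp
  ring

section Births

variable {μ t : ℝ} {b : ℝ → ℝ}

theorem continuousOn_exp_neg_mul_mul_comp_sub (hb : ContinuousOn b (Ici 0)) (ht : 0 ≤ t) :
    ContinuousOn (fun a => exp (-μ * a) * b (t - a)) (uIcc 0 t) := by
  refine (continuous_exp.comp (continuous_const_mul (-μ))).continuousOn.mul
    (hb.comp (continuous_sub_left t).continuousOn fun a ha => ?_)
  rw [uIcc_of_le ht] at ha
  exact sub_nonneg.2 ha.2

theorem integral_exp_neg_mul_mul_comp_sub_le {B : ℝ} (hμ : μ ≠ 0) (ht : 0 ≤ t)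
    (hb : ContinuousOn b (Ici 0)) (hbB : ∀ s, 0 ≤ s → b s ≤ B) :
    ∫ a in (0:ℝ)..t, exp (-μ * a) * b (t - a) ≤ (1 - exp (-μ * t)) / μ * B := by
  have hexp : Continuous fun a => exp (-μ * a) := continuous_exp.comp (continuous_const_mul (-μ))
  calc ∫ a in (0:ℝ)..t, exp (-μ * a) * b (t - a)
      ≤ ∫ a in (0:ℝ)..t, exp (-μ * a) * B := by
        refine intervalIntegral.integral_mono_on ht
          (continuousOn_exp_neg_mul_mul_comp_sub hb ht).intervalIntegrable
          ((hexp.mul continuous_const).intervalIntegrable _ _) fun a ha => ?_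
        exact mul_le_mul_of_nonneg_left (hbB _ (sub_nonneg.2 ha.2)) (exp_pos _).le
    _ = (1 - exp (-μ * t)) / μ * B := by
        rw [intervalIntegral.integral_mul_const, integral_exp_neg_mul hμ]

end Births

theorem gurtin_maccamy_dissipativity_general
    (μ α : ℝ) (hμ : 0 < μ) (hα : 0 < α)
    (f : ℝ → ℝ) (hf : ∀ x, f x = x * Real.exp (-x))
    (β : ℝ → ℝ)
    (u₀ : ℝ → ℝ) (hu₀int : IntegrableOn u₀ (Set.Ioi 0))
    (b : ℝ → ℝ) (hbcont : ContinuousOn b (Set.Ici 0))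
    (hb : ∀ t, 0 ≤ t →
      b t = α * f (Real.exp (-μ * t) * (∫ a in Set.Ioi t, β a * u₀ (a - t))
        + ∫ a in (0:ℝ)..t, β a * Real.exp (-μ * a) * b (t - a)))
    (u : ℝ → ℝ → ℝ)
    (hu : ∀ t a, u t a = if t ≤ a then Real.exp (-μ * t) * u₀ (a - t)
                         else Real.exp (-μ * a) * b (t - a)) :
    ∀ t, 0 ≤ t →
      (∫ a in Set.Ioi (0:ℝ), u t a)
        ≤ Real.exp (-μ * t) * (∫ a in Set.Ioi (0:ℝ), u₀ a)
          + (1 - Real.exp (-μ * t)) * (α / (μ * Real.exp 1)) := by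
  intro t ht
  have hb_le : ∀ s, 0 ≤ s → b s ≤ α / exp 1 := fun s hs => by
    rw [hb s hs, hf, div_eq_mul_inv, ← exp_neg]
    exact mul_le_mul_of_nonneg_left (mul_exp_neg_le_exp_neg_one _) hα.le
  have h_old : EqOn (u t) (fun a => exp (-μ * t) * u₀ (a - t)) (Ioi t) := fun a ha => by
    rw [hu, if_pos (le_of_lt ha)]
  have h_young : EqOn (fun a => exp (-μ * a) * b (t - a)) (u t) (Ioo 0 t) := fun a ha => by
    rw [hu, if_neg (not_le.2 ha.2)]
  have h_old_int : IntegrableOn (u t) (Ioi t) := by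
    refine IntegrableOn.congr_fun ?_ h_old.symm measurableSet_Ioi
    have := (hu₀int.comp_sub_right_Ioi t).const_mul (exp (-μ * t))
    rwa [zero_add] at this
  have h_young_int : IntervalIntegrable (u t) volume 0 t :=
    (continuousOn_exp_neg_mul_mul_comp_sub hbcont ht).intervalIntegrable.congr_uIoo
      (uIoo_of_le ht ▸ h_young)
  rw [← intervalIntegral.integral_interval_add_Ioi' h_young_int h_old_int,
    ← intervalIntegral.integral_congr_Ioo_of_le ht h_young,
    setIntegral_congr_fun measurableSet_Ioi h_old, integral_const_mul,
    ← setIntegral_Ioi_comp_sub_right u₀ 0 t, zero_add]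
  calc _ ≤ (1 - exp (-μ * t)) / μ * (α / exp 1)
          + exp (-μ * t) * ∫ a in Ioi t, u₀ (a - t) :=
        add_le_add_left (integral_exp_neg_mul_mul_comp_sub_le hμ.ne' ht hbcont hb_le) _
    _ = _ := by field_simp; ring

/-- For the Gurtin–MacCamy model, the total population
`U(t) = ∫₀^∞ u(t,a) da` satisfies `U(t) ≤ e^{-μt} U₀ + (1 - e^{-μt}) Λ`
with `Λ = α/(μ e)`. -/
theorem gurtin_maccamy_dissipativity
    (μ α : ℝ) (hμ : 0 < μ) (hα : 0 < α)
    (f : ℝ → ℝ) (hf : ∀ x, f x = x * Real.exp (-x))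
    (β : ℝ → ℝ) (hβmeas : Measurable β) (hβnonneg : ∀ a, 0 ≤ β a)
    (hβbdd : ∃ C : ℝ, ∀ᵐ a ∂(volume.restrict (Set.Ioi 0)), β a ≤ C)
    (hβnorm : (∫ a in Set.Ioi (0:ℝ), β a * Real.exp (-μ * a)) = 1)
    (u₀ : ℝ → ℝ) (hu₀int : IntegrableOn u₀ (Set.Ioi 0))
    (hu₀nonneg : ∀ a, 0 ≤ u₀ a)
    (b : ℝ → ℝ) (hbcont : ContinuousOn b (Set.Ici 0))
    (hb : ∀ t, 0 ≤ t →
      b t = α * f (Real.exp (-μ * t) * (∫ a in Set.Ioi t, β a * u₀ (a - t))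
        + ∫ a in (0:ℝ)..t, β a * Real.exp (-μ * a) * b (t - a)))
    (u : ℝ → ℝ → ℝ)
    (hu : ∀ t a, u t a = if t ≤ a then Real.exp (-μ * t) * u₀ (a - t)
                         else Real.exp (-μ * a) * b (t - a)) :
    ∀ t, 0 ≤ t →
      (∫ a in Set.Ioi (0:ℝ), u t a)
        ≤ Real.exp (-μ * t) * (∫ a in Set.Ioi (0:ℝ), u₀ a)
          + (1 - Real.exp (-μ * t)) * (α / (μ * Real.exp 1)) :=
  gurtin_maccamy_dissipativity_general μ α hμ hα f hf β u₀ hu₀int b hbcont hb u hu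
end

section
/- If ∫₀^{a*} u₀(a) da = 0, then ∫₀^∞ β(a)·u(t,a) da = 0 for all t ≥ 0, the solution is explicitly given by u(t,a) = exp(−μt)·u₀(a−t) if a ≥ t and u(t,a) = 0 if a < t, and consequently ‖u(t,·)‖_{L¹} ≤ exp(−μt)·‖u₀‖_{L¹} for all t ≥ 0, so that ‖u(t,·)‖_{L¹} → 0 exponentially as t → ∞. -/
/-!
The hypothesis says that `u₀` vanishes a.e. on the ages `(0, a*)` at which individuals can still
reproduce, while `β` vanishes a.e. beyond `a*`. Hence the initial population never contributes to
births: `∫_t^∞ β(a) u₀(a - t) da = 0` for all `t ≥ 0`. The Volterra equation then reads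
`b(t) = α f(∫_0^t β(a) e^{-μa} b(t - a) da)` with `f(x) = x e^{-x}` vanishing to first order at
`0`, so `|b t| ≤ L ∫_0^t |b|` on every bounded interval and Grönwall's inequality forces
`b = 0`. What is left is pure transport, which loses mass at rate `μ`.
-/

open MeasureTheory Filter Set

theorem ae_imp_of_mem_biUnion_of_isOpen {X ι : Type*} [TopologicalSpace X]
    [SecondCountableTopology X] [MeasurableSpace X] {μ : Measure X} {p : X → Prop}
    (I : Set ι) (U : ι → Set X) (hU : ∀ i ∈ I, IsOpen (U i))
    (h : ∀ i ∈ I, ∀ᵐ x ∂μ, x ∈ U i → p x) :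
    ∀ᵐ x ∂μ, x ∈ ⋃ i ∈ I, U i → p x := by
  obtain ⟨T, hTI, hT, hTU⟩ := TopologicalSpace.isOpen_biUnion_countable I U hU
  rw [← hTU]
  filter_upwards [(ae_ball_iff hT).2 fun i hi => h i (hTI hi)] with x hx hxU
  obtain ⟨i, hi, hxi⟩ := mem_iUnion₂.1 hxU
  exact hx i hi hxi

theorem ae_comp_add_mul_eq_zero {w v : ℝ → ℝ} (hw₀ : ∀ a, 0 ≤ w a)
    (hw : IntegrableOn w (Ioi 0)) (hv₀ : ∀ a, 0 ≤ v a) (hv : IntegrableOn v (Ioi 0))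
    (hvS : ∫ a in {a : ℝ | 0 < a ∧ 0 < ∫ σ in Ioi a, w σ}, v a = 0) {t : ℝ} (ht : 0 ≤ t) :
    ∀ᵐ s ∂volume.restrict (Ioi 0), w (s + t) * v s = 0 := by
  set Z := {a : ℝ | 0 < a ∧ ∫ σ in Ioi a, w σ = 0}
  have hv_S : ∀ᵐ s, s ∈ {a : ℝ | 0 < a ∧ 0 < ∫ σ in Ioi a, w σ} → v s = 0 :=
    ae_imp_of_ae_restrict <|
      (integral_eq_zero_iff_of_nonneg hv₀ (hv.mono_set fun a ha => ha.1)).1 hvS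
  have hw_Z : ∀ z ∈ Z, ∀ᵐ σ, σ ∈ Ioi z → w σ = 0 := fun z hz =>
    ae_imp_of_ae_restrict <|
      (integral_eq_zero_iff_of_nonneg hw₀ (hw.mono_set (Ioi_subset_Ioi hz.1.le))).1 hz.2
  have hw_U : ∀ᵐ s, s + t ∈ ⋃ z ∈ Z, Ioi z → w (s + t) = 0 :=
    (measurePreserving_add_right volume t).quasiMeasurePreserving.ae <|
      ae_imp_of_mem_biUnion_of_isOpen Z Ioi (fun _ _ => isOpen_Ioi) hw_Z
  -- `Z` has at most one element not lying above another one: its minimum.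
  have h_min : ∀ᵐ s, s ∉ {s | s ∈ Z ∧ ∀ z ∈ Z, s ≤ z} :=
    measure_eq_zero_iff_ae_notMem.1 <| Set.Subsingleton.measure_zero
      (fun x hx y hy => le_antisymm (hx.2 y hy.1) (hy.2 x hx.1)) _
  rw [ae_restrict_iff' measurableSet_Ioi]
  filter_upwards [hv_S, hw_U, h_min] with s hvs hws hs_min hs
  by_cases hpos : 0 < ∫ σ in Ioi s, w σ
  · rw [hvs ⟨hs, hpos⟩, mul_zero]
  · have hsZ : s ∈ Z := ⟨hs, le_antisymm (not_lt.1 hpos)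
      (setIntegral_nonneg measurableSet_Ioi fun σ _ => hw₀ σ)⟩
    obtain ⟨z, hz, hzs⟩ : ∃ z ∈ Z, z < s := by
      by_contra! h
      exact hs_min ⟨hsZ, h⟩
    rw [hws (mem_biUnion hz (by simp only [mem_Ioi]; linarith)), zero_mul]

theorem setIntegral_Ioi_eq_setIntegral_Ioi_zero_add {E : Type*} [NormedAddCommGroup E]
    [NormedSpace ℝ E] (g : ℝ → E) (t : ℝ) :
    ∫ a in Ioi t, g a = ∫ s in Ioi 0, g (s + t) := by
  have := (measurePreserving_add_right volume t).setIntegral_preimage_emb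
    (MeasurableEquiv.addRight t).measurableEmbedding g (Ioi t)
  rw [← this, preimage_add_const_Ioi, sub_self]

theorem setIntegral_Ioi_zero_indicator_Ici {E : Type*} [NormedAddCommGroup E]
    [NormedSpace ℝ E] (G : ℝ → E) {t : ℝ} (ht : 0 ≤ t) :
    ∫ a in Ioi 0, (Ici t).indicator G a = ∫ a in Ioi t, G a := by
  rw [setIntegral_indicator measurableSet_Ici]
  rcases ht.eq_or_lt with rfl | ht
  · rw [inter_eq_left.2 Ioi_subset_Ici_self]
  · rw [inter_eq_right.2 (Ici_subset_Ioi.2 ht), integral_Ici_eq_integral_Ioi]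

theorem setIntegral_Ioi_mul_comp_sub_eq_zero {β u₀ : ℝ → ℝ} {μ C : ℝ} (hμ : 0 < μ)
    (hβ : AEStronglyMeasurable β (volume.restrict (Ioi 0))) (hβ₀ : ∀ a, 0 ≤ β a)
    (hβC : ∀ᵐ a ∂volume.restrict (Ioi 0), β a ≤ C) (hu₀ : ∀ a, 0 ≤ u₀ a)
    (hu₀int : IntegrableOn u₀ (Ioi 0))
    (hu₀S : ∫ a in {a : ℝ | 0 < a ∧ 0 < ∫ σ in Ioi a, β σ * Real.exp (-μ * σ)}, u₀ a = 0)
    {t : ℝ} (ht : 0 ≤ t) :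
    ∫ a in Ioi t, β a * u₀ (a - t) = 0 := by
  have hw : IntegrableOn (fun a => β a * Real.exp (-μ * a)) (Ioi 0) :=
    (exp_neg_integrableOn_Ioi 0 hμ).bdd_mul hβ
      (hβC.mono fun a ha => by rwa [Real.norm_of_nonneg (hβ₀ a)])
  have h := ae_comp_add_mul_eq_zero (fun a => mul_nonneg (hβ₀ a) (Real.exp_pos _).le) hw
    hu₀ hu₀int hu₀S ht
  rw [setIntegral_Ioi_eq_setIntegral_Ioi_zero_add]
  refine integral_eq_zero_of_ae (h.mono fun s hs => ?_)
  simpa [mul_right_comm _ (Real.exp _), Real.exp_ne_zero] using hs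

theorem ae_abs_mul_exp_neg_mul_le {β : ℝ → ℝ} {μ C : ℝ} (hμ : 0 ≤ μ) (hβ₀ : ∀ a, 0 ≤ β a)
    (hβC : ∀ᵐ a ∂volume.restrict (Ioi 0), β a ≤ C) :
    ∀ᵐ a ∂volume.restrict (Ioi 0), |β a * Real.exp (-μ * a)| ≤ C := by
  filter_upwards [hβC, ae_restrict_mem measurableSet_Ioi] with a ha ha₀
  rw [abs_of_nonneg (mul_nonneg (hβ₀ a) (Real.exp_pos _).le)]
  exact (mul_le_of_le_one_right (hβ₀ a)
    (Real.exp_le_one_iff.2 (by nlinarith [mem_Ioi.1 ha₀]))).trans ha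

theorem eq_zero_of_le_mul_integral {B : ℝ → ℝ} {K T : ℝ} (hB : Continuous B)
    (hB₀ : ∀ t ∈ Icc 0 T, 0 ≤ B t) (hle : ∀ t ∈ Icc 0 T, B t ≤ K * ∫ s in 0..t, B s) :
    ∀ t ∈ Icc 0 T, B t = 0 := by
  have hΦ := eq_zero_of_abs_deriv_le_mul_abs_self_of_eq_zero_right (K := |K|)
    (fun t _ => (hB.integral_hasStrictDerivAt 0 t).hasDerivAt.continuousAt.continuousWithinAt)
    (fun t _ => (hB.integral_hasStrictDerivAt 0 t).hasDerivAt.hasDerivWithinAt)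
    intervalIntegral.integral_same fun t ht => by
      rw [Real.norm_of_nonneg (hB₀ t (Ico_subset_Icc_self ht)), Real.norm_eq_abs]
      exact (hle t (Ico_subset_Icc_self ht)).trans ((le_abs_self _).trans (abs_mul _ _).le)
  intro t ht
  exact le_antisymm (by simpa [hΦ t ht] using hle t ht) (hB₀ t ht)

theorem abs_intervalIntegral_mul_comp_sub_le {k b B : ℝ → ℝ} {C t : ℝ}
    (hk : ∀ᵐ a ∂volume.restrict (Ioi 0), |k a| ≤ C) (hB : Continuous B)
    (hbB : ∀ s ∈ Icc 0 t, |b s| ≤ B s) (ht : 0 ≤ t) :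
    |∫ a in 0..t, k a * b (t - a)| ≤ C * ∫ s in 0..t, B s := calc
  _ ≤ ∫ a in 0..t, C * B (t - a) := by
      refine intervalIntegral.norm_integral_le_of_norm_le (f := fun a => k a * b (t - a)) ht ?_
        (((hB.comp (continuous_sub_left t)).const_mul C).intervalIntegrable (μ := volume) 0 t)
      filter_upwards [ae_imp_of_ae_restrict hk] with a hka ha
      rw [Real.norm_eq_abs, abs_mul]
      exact mul_le_mul (hka ha.1) (hbB _ ⟨sub_nonneg.2 ha.2, by linarith [ha.1]⟩)
        (abs_nonneg _) ((abs_nonneg _).trans (hka ha.1))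
  _ = C * ∫ s in 0..t, B s := by
      rw [intervalIntegral.integral_const_mul, intervalIntegral.integral_comp_sub_left,
        sub_self, sub_zero]

theorem eq_zero_of_eq_comp_volterra {k b F : ℝ → ℝ} {C : ℝ}
    (hk : ∀ᵐ a ∂volume.restrict (Ioi 0), |k a| ≤ C)
    (hF : ∀ R, ∃ L, ∀ x, |x| ≤ R → |F x| ≤ L * |x|) (hb : ContinuousOn b (Ici 0))
    (heq : ∀ t, 0 ≤ t → b t = F (∫ a in 0..t, k a * b (t - a))) {T : ℝ} (hT : 0 ≤ T) :
    b T = 0 := by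
  set B : ℝ → ℝ := fun s => |b (max s 0)|
  have hB : Continuous B :=
    (hb.comp_continuous (continuous_id.max continuous_const) fun s => le_max_right s 0).abs
  have hBb : ∀ s, 0 ≤ s → B s = |b s| := fun s hs => by simp only [B, max_eq_left hs]
  have hconv : ∀ t, 0 ≤ t → |∫ a in 0..t, k a * b (t - a)| ≤ C * ∫ s in 0..t, B s :=
    fun t ht => abs_intervalIntegral_mul_comp_sub_le hk hB (fun s hs => (hBb s hs.1).ge) ht
  obtain ⟨M, hM⟩ := (isCompact_Icc (a := (0 : ℝ)) (b := T)).exists_bound_of_continuousOn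
    hB.continuousOn
  obtain ⟨L, hL⟩ := hF (|C| * (M * T))
  have hbound : ∀ t ∈ Icc 0 T, B t ≤ |L| * C * ∫ s in 0..t, B s := by
    rintro t ⟨ht, htT⟩
    have hM₀ : 0 ≤ M := (norm_nonneg _).trans (hM 0 ⟨le_rfl, hT⟩)
    have hΦ : |∫ s in 0..t, B s| ≤ M * T := by
      have := intervalIntegral.norm_integral_le_of_norm_le_const (a := 0) (b := t) (C := M)
        fun s hs => hM s ⟨(le_min le_rfl ht).trans hs.1.le, hs.2.trans (max_le hT htT)⟩
      rw [sub_zero, abs_of_nonneg ht] at this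
      exact this.trans (mul_le_mul_of_nonneg_left htT hM₀)
    have hR : |∫ a in 0..t, k a * b (t - a)| ≤ |C| * (M * T) := calc
      _ ≤ C * ∫ s in 0..t, B s := hconv t ht
      _ ≤ |C| * |∫ s in 0..t, B s| := (le_abs_self _).trans (abs_mul _ _).le
      _ ≤ |C| * (M * T) := by gcongr
    calc B t = |F (∫ a in 0..t, k a * b (t - a))| := by rw [hBb t ht, ← heq t ht]
      _ ≤ L * |∫ a in 0..t, k a * b (t - a)| := hL _ hR
      _ ≤ |L| * |∫ a in 0..t, k a * b (t - a)| := by gcongr; exact le_abs_self L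
      _ ≤ |L| * C * ∫ s in 0..t, B s := by rw [mul_assoc]; gcongr; exact hconv t ht
  simpa [hBb T hT] using
    eq_zero_of_le_mul_integral hB (fun t _ => abs_nonneg _) hbound T ⟨hT, le_rfl⟩

theorem abs_mul_exp_neg_le {x R : ℝ} (hx : |x| ≤ R) : |x * Real.exp (-x)| ≤ Real.exp R * |x| := by
  rw [abs_mul, Real.abs_exp, mul_comm]
  gcongr
  exact (neg_le_abs x).trans hx

/-- The set `{a | 0 < a ∧ 0 < ∫ σ in Ioi a, β σ * exp (-μ * σ)}` is the paper's `(0, a*)`. -/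
theorem gurtin_maccamy_boundary_extinction_general
    (μ α : ℝ) (hμ : 0 < μ)
    (f : ℝ → ℝ) (hf : ∀ x, f x = x * Real.exp (-x))
    (β : ℝ → ℝ) (hβmeas : Measurable β) (hβnonneg : ∀ a, 0 ≤ β a)
    (hβbdd : ∃ C : ℝ, ∀ᵐ a ∂(volume.restrict (Set.Ioi 0)), β a ≤ C)
    (u₀ : ℝ → ℝ) (hu₀int : IntegrableOn u₀ (Set.Ioi 0))
    (hu₀nonneg : ∀ a, 0 ≤ u₀ a)
    (b : ℝ → ℝ) (hbcont : ContinuousOn b (Set.Ici 0))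
    (hb : ∀ t, 0 ≤ t →
      b t = α * f (Real.exp (-μ * t) * (∫ a in Set.Ioi t, β a * u₀ (a - t))
        + ∫ a in (0:ℝ)..t, β a * Real.exp (-μ * a) * b (t - a)))
    (u : ℝ → ℝ → ℝ)
    (hu : ∀ t a, u t a = if t ≤ a then Real.exp (-μ * t) * u₀ (a - t)
                         else Real.exp (-μ * a) * b (t - a))
    (hu₀zero :
      (∫ a in {a : ℝ | 0 < a ∧ 0 < ∫ σ in Set.Ioi a, β σ * Real.exp (-μ * σ)}, u₀ a)
        = 0) :
    (∀ t, 0 ≤ t → (∫ a in Set.Ioi (0:ℝ), β a * u t a) = 0) ∧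
    (∀ t, 0 ≤ t → ∀ a, t ≤ a → u t a = Real.exp (-μ * t) * u₀ (a - t)) ∧
    (∀ t, 0 ≤ t → ∀ a, a < t → u t a = 0) ∧
    (∀ t, 0 ≤ t →
      (∫ a in Set.Ioi (0:ℝ), |u t a|)
        ≤ Real.exp (-μ * t) * ∫ a in Set.Ioi (0:ℝ), |u₀ a|) ∧
    Tendsto (fun t => ∫ a in Set.Ioi (0:ℝ), |u t a|) atTop (nhds 0) := by
  obtain ⟨C, hβC⟩ := hβbdd
  have hbirth : ∀ t, 0 ≤ t → ∫ a in Ioi t, β a * u₀ (a - t) = 0 := fun t =>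
    setIntegral_Ioi_mul_comp_sub_eq_zero hμ hβmeas.aestronglyMeasurable hβnonneg hβC
      hu₀nonneg hu₀int hu₀zero
  have hb₀ : ∀ t, 0 ≤ t → b t = 0 := fun t =>
    eq_zero_of_eq_comp_volterra (F := fun x => α * f x)
      (ae_abs_mul_exp_neg_mul_le hμ.le hβnonneg hβC)
      (fun R => ⟨|α| * Real.exp R, fun x hx => by
        rw [abs_mul, hf, mul_assoc]; gcongr; exact abs_mul_exp_neg_le hx⟩)
      hbcont fun t ht => by simpa [hbirth t ht] using hb t ht
  have hu_transport : ∀ t a,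
      u t a = (Ici t).indicator (fun a => Real.exp (-μ * t) * u₀ (a - t)) a := by
    intro t a
    by_cases h : t ≤ a
    · simp [hu, h]
    · simp [hu, h, hb₀ (t - a) (by linarith)]
  have hL1 : ∀ t, 0 ≤ t →
      ∫ a in Ioi 0, |u t a| = Real.exp (-μ * t) * ∫ a in Ioi 0, |u₀ a| := fun t ht => by
    simp_rw [hu_transport, ← Real.norm_eq_abs, norm_indicator_eq_indicator_norm,
      setIntegral_Ioi_zero_indicator_Ici _ ht, setIntegral_Ioi_eq_setIntegral_Ioi_zero_add _ t,
      norm_mul, Real.norm_of_nonneg (Real.exp_pos _).le, add_sub_cancel_right, integral_const_mul]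
  refine ⟨fun t ht => ?_, fun t _ a hta => by rw [hu, if_pos hta],
    fun t _ a hat => by rw [hu_transport, indicator_of_notMem (notMem_Ici.2 hat)],
    fun t ht => (hL1 t ht).le, ?_⟩
  · simp_rw [hu_transport, ← indicator_mul_right, setIntegral_Ioi_zero_indicator_Ici _ ht,
      mul_left_comm (β _), integral_const_mul, hbirth t ht, mul_zero]
  · have hdecay : Tendsto (fun t => Real.exp (-μ * t) * ∫ a in Ioi 0, |u₀ a|) atTop (nhds 0) := by
      simpa using (Real.tendsto_exp_comp_nhds_zero.2
        (tendsto_id.const_mul_atTop_of_neg (neg_neg_of_pos hμ))).mul_const (∫ a in Ioi 0, |u₀ a|)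
    exact hdecay.congr' (eventually_ge_atTop 0 |>.mono fun t ht => (hL1 t ht).symm)

/-- Extinction on the boundary region: if `∫₀^{a*} u₀(a) da = 0`
then the birth term vanishes for all times, the solution is the pure transport
`u(t,a) = e^{-μt} u₀(a-t)` for `a ≥ t` and `u(t,a) = 0` for `a < t`, hence
`‖u(t,·)‖_{L¹} ≤ e^{-μt} ‖u₀‖_{L¹} → 0` exponentially.  Here, as the tail integral
`a ↦ ∫_a^∞ β(σ) e^{-μσ} dσ` is nonincreasing, the interval `(0, a*)` coincides with
the set `{a > 0 : ∫_a^∞ β(σ) e^{-μσ} dσ > 0}`. -/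
theorem gurtin_maccamy_boundary_extinction
    (μ α : ℝ) (hμ : 0 < μ) (hα : 0 < α)
    (f : ℝ → ℝ) (hf : ∀ x, f x = x * Real.exp (-x))
    (β : ℝ → ℝ) (hβmeas : Measurable β) (hβnonneg : ∀ a, 0 ≤ β a)
    (hβbdd : ∃ C : ℝ, ∀ᵐ a ∂(volume.restrict (Set.Ioi 0)), β a ≤ C)
    (hβnorm : (∫ a in Set.Ioi (0:ℝ), β a * Real.exp (-μ * a)) = 1)
    (u₀ : ℝ → ℝ) (hu₀int : IntegrableOn u₀ (Set.Ioi 0))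
    (hu₀nonneg : ∀ a, 0 ≤ u₀ a)
    (b : ℝ → ℝ) (hbcont : ContinuousOn b (Set.Ici 0))
    (hb : ∀ t, 0 ≤ t →
      b t = α * f (Real.exp (-μ * t) * (∫ a in Set.Ioi t, β a * u₀ (a - t))
        + ∫ a in (0:ℝ)..t, β a * Real.exp (-μ * a) * b (t - a)))
    (u : ℝ → ℝ → ℝ)
    (hu : ∀ t a, u t a = if t ≤ a then Real.exp (-μ * t) * u₀ (a - t)
                         else Real.exp (-μ * a) * b (t - a))
    (hu₀zero :
      (∫ a in {a : ℝ | 0 < a ∧ 0 < ∫ σ in Set.Ioi a, β σ * Real.exp (-μ * σ)}, u₀ a)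
        = 0) :
    (∀ t, 0 ≤ t → (∫ a in Set.Ioi (0:ℝ), β a * u t a) = 0) ∧
    (∀ t, 0 ≤ t → ∀ a, t ≤ a → u t a = Real.exp (-μ * t) * u₀ (a - t)) ∧
    (∀ t, 0 ≤ t → ∀ a, a < t → u t a = 0) ∧
    (∀ t, 0 ≤ t →
      (∫ a in Set.Ioi (0:ℝ), |u t a|)
        ≤ Real.exp (-μ * t) * ∫ a in Set.Ioi (0:ℝ), |u₀ a|) ∧
    Tendsto (fun t => ∫ a in Set.Ioi (0:ℝ), |u t a|) atTop (nhds 0) :=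
  gurtin_maccamy_boundary_extinction_general μ α hμ f hf β hβmeas hβnonneg hβbdd u₀ hu₀int hu₀nonneg
    b hbcont hb u hu hu₀zero
end

section
/- If ∫₀^{a*} u₀(a) da > 0, then there exists t₀ = t₀(u₀) > 0 such that ∫₀^∞ β(a)·u(t,a) da > 0 (equivalently b(t) > 0) for every t ≥ t₀. -/
/-!
Write the equation as `b = g (F + ∫₀ᵗ k(a) b(t - a) da)` with kernel `k = β e^{-μ·} ≥ 0`,
forcing `F(t) = e^{-μt} ∫_t^∞ β(a) u₀(a - t) da ≥ 0` and `g = α f`, which has the sign of its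
argument. A first-exit argument gives `b ≥ 0`, so `b(t) > 0` as soon as `F(t) > 0` or the
convolution is positive at `t`. The hypothesis on `u₀` yields some `p > 0` with `F(p) > 0`
(by Tonelli: otherwise `u₀` vanishes a.e. wherever the tail of `k` is positive). Positivity then
propagates: if `b(p) > 0` and `s > 0` lies in the essential support of `k`, then `b(p + s) > 0`.
Two such shifts `s < s'` closer together than the length of an interval where `b > 0` make its
translates overlap and grow, until they cover a half-line.
-/

open MeasureTheory Filter Set Topology

theorem setIntegral_pos_of_ae_pos {α : Type*} [MeasurableSpace α] {μ : Measure α} {g : α → ℝ}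
    {s E : Set α} (hg : 0 ≤ᵐ[μ.restrict s] g) (hgi : IntegrableOn g s μ) (hEs : E ⊆ s)
    (hE : 0 < μ E) (hgE : ∀ᵐ x ∂μ, x ∈ E → 0 < g x) : 0 < ∫ x in s, g x ∂μ := by
  rw [setIntegral_pos_iff_support_of_nonneg_ae hg hgi]
  refine hE.trans_le (measure_mono_ae ?_)
  filter_upwards [hgE] with x hx hxE
  exact ⟨(hx hxE).ne', hEs hxE⟩

theorem measure_support_inter_pos_of_setIntegral_pos {α : Type*} [MeasurableSpace α]
    {μ : Measure α} {k : α → ℝ} (hk0 : ∀ a, 0 ≤ k a) {s : Set α} (h : 0 < ∫ a in s, k a ∂μ) :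
    0 < μ (Function.support k ∩ s) :=
  (setIntegral_pos_iff_support_of_nonneg_ae (ae_of_all _ hk0)
    (Integrable.of_integral_ne_zero h.ne')).mp h

theorem exists_nonneg_Ico_neg_Ico_of_neg {b : ℝ → ℝ} (hneg : ∃ t, 0 ≤ t ∧ b t < 0) :
    ∃ s, 0 ≤ s ∧ (∀ r ∈ Ico 0 s, 0 ≤ b r) ∧ ∀ h > 0, ∃ r ∈ Ico s (s + h), b r < 0 := by
  set N := {t | 0 ≤ t ∧ b t < 0}
  have hN : N.Nonempty := hneg
  have hNbdd : BddBelow N := ⟨0, fun t ht => ht.1⟩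
  refine ⟨sInf N, le_csInf hN fun t ht => ht.1, fun r hr => ?_, fun h hh => ?_⟩
  · by_contra! hbr
    exact (csInf_le hNbdd ⟨hr.1, hbr⟩).not_gt hr.2
  · obtain ⟨r, hrN, hr⟩ := (csInf_lt_iff hNbdd hN).mp (lt_add_of_pos_right (sInf N) hh)
    exact ⟨r, ⟨csInf_le hNbdd hrN, hr⟩, hrN.2⟩

theorem Ioi_subset_of_Ioo_subset_of_add_mem {P : Set ℝ} {a b s : ℝ} (hs : 0 < s)
    (hsab : s < b - a) (hab : Ioo a b ⊆ P) (hP : ∀ p ∈ P, p + s ∈ P) : Ioi a ⊆ P := by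
  have hcover : ∀ n : ℕ, Ioo a (b + n * s) ⊆ P := by
    intro n
    induction n with
    | zero => simpa using hab
    | succ n ih =>
      intro t ⟨hat, htb⟩
      rcases lt_or_ge t (b + n * s) with ht | ht
      · exact ih ⟨hat, ht⟩
      · have hns : 0 ≤ (n : ℝ) * s := by positivity
        have hts : t - s ∈ Ioo a (b + n * s) := ⟨by linarith, by push_cast at htb; linarith⟩
        simpa using hP _ (ih hts)
  intro t (hat : a < t)
  obtain ⟨n, hn⟩ := exists_nat_gt ((t - b) / s)
  exact hcover n ⟨hat, by rw [div_lt_iff₀ hs] at hn; linarith⟩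

theorem Ioo_add_mul_subset_of_add_mem {P : Set ℝ} {x y s s' : ℝ} (hss' : s ≤ s')
    (hlen : s' - s < y - x) (hxy : Ioo x y ⊆ P) (hP : ∀ p ∈ P, p + s ∈ P ∧ p + s' ∈ P)
    (n : ℕ) : Ioo (x + n * s) (y + n * s') ⊆ P := by
  induction n with
  | zero => simpa using hxy
  | succ n ih =>
    have hn : (0 : ℝ) ≤ n * (s' - s) := by positivity
    intro t ⟨hxt, hty⟩
    push_cast at hxt hty
    rcases lt_or_ge t (y + n * s' + s) with ht | ht
    · simpa using (hP _ (ih (a := t - s) ⟨by linarith, by linarith⟩)).1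
    · simpa using (hP _ (ih (a := t - s') ⟨by nlinarith, by linarith⟩)).2

theorem exists_Ioi_subset_of_add_mem {P : Set ℝ} {x y s s' : ℝ} (hs : 0 < s) (hss' : s < s')
    (hlen : s' - s < y - x) (hxy : Ioo x y ⊆ P) (hP : ∀ p ∈ P, p + s ∈ P ∧ p + s' ∈ P) :
    ∃ T, Ioi T ⊆ P := by
  obtain ⟨n, hn⟩ := exists_nat_gt (s / (s' - s))
  rw [div_lt_iff₀ (sub_pos.mpr hss')] at hn
  refine ⟨x + n * s, Ioi_subset_of_Ioo_subset_of_add_mem hs ?_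
    (Ioo_add_mul_subset_of_add_mem hss'.le hlen hxy hP n) fun p hp => (hP p hp).1⟩
  nlinarith

theorem MeasureTheory.Measure.exists_lt_mem_support_inter {μ : Measure ℝ} [NullSingletonClass μ]
    {c : ℝ} (hc : c ∈ μ.support) {U : Set ℝ} (hU : U ∈ 𝓝 c) :
    ∃ s ∈ μ.support ∩ U, ∃ s' ∈ μ.support ∩ U, s < s' := by
  have hpos : 0 < μ (μ.support ∩ U) := by
    rw [inter_comm, measure_inter_conull Measure.support_mem_ae]
    exact (Measure.mem_support_iff_forall c).mp hc U hU
  obtain ⟨s, hs, s', hs', hne⟩ : (μ.support ∩ U).Nontrivial := by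
    by_contra h
    exact hpos.ne' ((not_nontrivial_iff.mp h).measure_zero μ)
  rcases hne.lt_or_gt with h | h
  · exact ⟨s, hs, s', hs', h⟩
  · exact ⟨s', hs', s, hs, h⟩

theorem exists_pos_volume_inter_preimage_add {A B : Set ℝ} (hA : MeasurableSet A)
    (hB : MeasurableSet B) (hApos : 0 < volume A) (hAB : ∀ σ ∈ A, 0 < volume (B ∩ Ioi σ)) :
    ∃ t > 0, 0 < volume (A ∩ (· + t) ⁻¹' B) := by
  by_contra! h
  have hnull : ∀ᵐ t ∂volume.restrict (Ioi 0), ∀ᵐ σ ∂volume, σ ∈ A → σ + t ∉ B := by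
    filter_upwards [ae_restrict_mem measurableSet_Ioi] with t ht
    exact measure_eq_zero_iff_ae_notMem.mp (nonpos_iff_eq_zero.mp (h t ht)) |>.mono
      fun σ hσ hσA hσB => hσ ⟨hσA, hσB⟩
  have hmeas : MeasurableSet {x : ℝ × ℝ | x.2 ∈ A → x.2 + x.1 ∉ B} :=
    (measurable_snd hA).himp ((measurable_snd.add measurable_fst) hB).compl
  rw [Measure.ae_ae_comm hmeas] at hnull
  refine hApos.ne' (measure_eq_zero_iff_ae_notMem.mpr ?_)
  filter_upwards [hnull] with σ hσ hσA
  have hshift : (· + σ) ⁻¹' (B ∩ Ioi σ) = (σ + ·) ⁻¹' B ∩ Ioi 0 := by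
    ext t; simp [add_comm]
  refine (hAB σ hσA).ne' ?_
  rw [← measure_preimage_add_right _ σ, hshift, ← Measure.restrict_apply' measurableSet_Ioi,
    measure_eq_zero_iff_ae_notMem]
  exact hσ.mono fun t ht => ht hσA

section Volterra

variable {k F g b : ℝ → ℝ}

theorem integrableOn_Ioc_mul_comp_sub (hk : IntegrableOn k (Ioi 0))
    (hb : ContinuousOn b (Ici 0)) (t : ℝ) :
    IntegrableOn (fun a => k a * b (t - a)) (Ioc 0 t) :=
  (hk.mono_set Ioc_subset_Ioi_self).mul_continuousOn_of_subset
    (hb.comp (continuousOn_const.sub continuousOn_id) fun _ ha => sub_nonneg.mpr ha.2)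
    measurableSet_Ioc isCompact_Icc Ioc_subset_Icc_self

theorem mul_le_setIntegral_Ioc_mul_comp_sub {C : ℝ} (hk0 : ∀ a, 0 ≤ k a)
    (hkC : ∀ᵐ a ∂volume.restrict (Ioi 0), k a ≤ C) (hk : IntegrableOn k (Ioi 0))
    (hb : ContinuousOn b (Ici 0)) {s t m : ℝ} (hs : 0 ≤ s) (hst : s ≤ t) (hm : m ≤ 0)
    (hb0 : ∀ r ∈ Ico 0 s, 0 ≤ b r) (hbm : ∀ r ∈ Icc s t, m ≤ b r) :
    C * m * (t - s) ≤ ∫ a in Ioc 0 t, k a * b (t - a) := by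
  calc C * m * (t - s) = ∫ a in Ioc 0 t, (Ioc 0 (t - s)).indicator (fun _ => C * m) a := by
        rw [setIntegral_indicator measurableSet_Ioc,
          inter_eq_right.mpr (Ioc_subset_Ioc_right (by linarith)), setIntegral_const,
          Real.volume_real_Ioc_of_le (by linarith), smul_eq_mul]
        ring
    _ ≤ ∫ a in Ioc 0 t, k a * b (t - a) := by
        refine integral_mono_ae ((integrableOn_const measure_Ioc_lt_top.ne).indicator
          measurableSet_Ioc) (integrableOn_Ioc_mul_comp_sub hk hb t) ?_
        filter_upwards [ae_restrict_of_ae_restrict_of_subset Ioc_subset_Ioi_self hkC,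
          ae_restrict_mem measurableSet_Ioc] with a hka ha
        by_cases has : a ≤ t - s
        · rw [indicator_of_mem (show a ∈ Ioc 0 (t - s) from ⟨ha.1, has⟩)]
          have := hbm (t - a) ⟨by linarith, by linarith [ha.1]⟩
          nlinarith [hk0 a]
        · rw [indicator_of_notMem fun h => has h.2]
          exact mul_nonneg (hk0 a) (hb0 _ ⟨by linarith [ha.2], by linarith⟩)

theorem volterra_nonneg {C L : ℝ} (hL : 0 ≤ L) (hk0 : ∀ a, 0 ≤ k a)
    (hkC : ∀ᵐ a ∂volume.restrict (Ioi 0), k a ≤ C) (hk : IntegrableOn k (Ioi 0))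
    (hF : ∀ t, 0 ≤ F t) (hg0 : ∀ x, 0 ≤ x → 0 ≤ g x) (hgL : ∀ x ∈ Icc (-1) 0, L * x ≤ g x)
    (hb : ContinuousOn b (Ici 0))
    (hbF : ∀ t, 0 ≤ t → b t = g (F t + ∫ a in Ioc 0 t, k a * b (t - a))) :
    ∀ t, 0 ≤ t → 0 ≤ b t := by
  have hC : 0 ≤ C := by
    have : (ae (volume.restrict (Ioi (0 : ℝ)))).NeBot := ae_restrict_neBot.mpr (by simp)
    obtain ⟨a, ha⟩ := hkC.exists
    exact (hk0 a).trans ha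
  by_contra! hneg
  obtain ⟨s, hs, hb0, hbneg⟩ := exists_nonneg_Ico_neg_Ico_of_neg hneg
  obtain ⟨M, hM⟩ := isCompact_Icc.exists_bound_of_continuousOn
    (hb.mono fun r (hr : r ∈ Icc s (s + 1)) => hs.trans hr.1)
  obtain ⟨h, hh, hh1, hhM, hhL⟩ : ∃ h > 0, h ≤ 1 ∧ C * M * h ≤ 1 ∧ L * C * h < 1 := by
    have hsmall : ∀ c : ℝ, ∀ᶠ h in 𝓝[>] 0, c * h < 1 := fun c =>
      nhdsWithin_le_nhds <| (continuous_const_mul c).continuousAt.eventually_lt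
        continuousAt_const (by simp)
    exact (eventually_mem_nhdsWithin.and ((hsmall 1).and ((hsmall (C * M)).and
      (hsmall (L * C))))).exists.imp fun h ⟨hh, h1, hM, hL⟩ => ⟨hh, by linarith, hM.le, hL⟩
  obtain ⟨tm, htm, hmin⟩ := isCompact_Icc.exists_isMinOn (nonempty_Icc.mpr (by linarith))
    (hb.mono fun r (hr : r ∈ Icc s (s + h)) => hs.trans hr.1)
  have hm : b tm < 0 := by
    obtain ⟨r, hr, hbr⟩ := hbneg h hh
    exact (hmin ⟨hr.1, hr.2.le⟩).trans_lt hbr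
  have hMm : -M ≤ b tm := (abs_le.mp (hM tm ⟨htm.1, by linarith [htm.2]⟩)).1
  -- `m = b tm` is the minimum of `b` on `[s, s + h]`; we show `m ≥ L X ≥ L C h m`,
  -- which contradicts `m < 0` since `L C h < 1`.
  set X := F tm + ∫ a in Ioc 0 tm, k a * b (tm - a)
  have hX : C * b tm * h ≤ X := by
    have := mul_le_setIntegral_Ioc_mul_comp_sub hk0 hkC hk hb hs htm.1 hm.le hb0
      fun r hr => hmin ⟨hr.1, hr.2.trans htm.2⟩
    have hCm : C * b tm ≤ 0 := mul_nonpos_of_nonneg_of_nonpos hC hm.le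
    nlinarith [hF tm, mul_le_mul_of_nonpos_left (show tm - s ≤ h by linarith [htm.2]) hCm]
  have hXneg : X < 0 := by
    by_contra! hX0
    exact hm.not_ge ((hbF tm (hs.trans htm.1)).symm ▸ hg0 X hX0)
  have hgX : L * X ≤ b tm := hbF tm (hs.trans htm.1) ▸ hgL X ⟨by nlinarith, hXneg.le⟩
  nlinarith [mul_le_mul_of_nonneg_left hX hL]

theorem setIntegral_Ioc_mul_comp_sub_nonneg (hk0 : ∀ a, 0 ≤ k a)
    (hb0 : ∀ t, 0 ≤ t → 0 ≤ b t) (t : ℝ) : 0 ≤ ∫ a in Ioc 0 t, k a * b (t - a) :=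
  setIntegral_nonneg measurableSet_Ioc fun a ha => mul_nonneg (hk0 a) (hb0 _ (by linarith [ha.2]))

theorem setIntegral_Ioc_mul_comp_sub_pos (hk0 : ∀ a, 0 ≤ k a) (hk : IntegrableOn k (Ioi 0))
    (hb : ContinuousOn b (Ici 0)) (hb0 : ∀ t, 0 ≤ t → 0 ≤ b t) {p s : ℝ} (hp : 0 < p)
    (hbp : 0 < b p) (hs : 0 < s) (hsk : s ∈ (volume.restrict (Function.support k)).support) :
    0 < ∫ a in Ioc 0 (p + s), k a * b (p + s - a) := by
  obtain ⟨ε, hε, hbε⟩ := Metric.eventually_nhds_iff.mp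
    ((hb.continuousAt (Ici_mem_nhds hp)).eventually (lt_mem_nhds hbp))
  set δ := min ε (min p s)
  have hδ : 0 < δ := lt_min hε (lt_min hp hs)
  have hδp : δ ≤ p := (min_le_right _ _).trans (min_le_left _ _)
  have hδs : δ ≤ s := (min_le_right _ _).trans (min_le_right _ _)
  have hE : 0 < volume (Function.support k ∩ Ioo (s - δ) (s + δ)) := by
    have := (Measure.mem_support_iff_forall s).mp hsk _
      (Ioo_mem_nhds (sub_lt_self s hδ) (lt_add_of_pos_right s hδ))
    rwa [Measure.restrict_apply measurableSet_Ioo, inter_comm] at this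
  refine setIntegral_pos_of_ae_pos ?_ (integrableOn_Ioc_mul_comp_sub hk hb _) ?_ hE
    (ae_of_all _ ?_)
  · filter_upwards [ae_restrict_mem measurableSet_Ioc] with a ha
    exact mul_nonneg (hk0 a) (hb0 _ (by linarith [ha.2]))
  · rintro a ⟨-, ha⟩
    constructor <;> linarith [ha.1, ha.2]
  · rintro a ⟨hka, ha⟩
    refine mul_pos ((hk0 a).lt_of_ne' hka) (hbε ?_)
    rw [Real.dist_eq, abs_lt]
    constructor <;> linarith [ha.1, ha.2, min_le_left ε (min p s)]

theorem volterra_pos_add_of_mem_support (hk0 : ∀ a, 0 ≤ k a) (hk : IntegrableOn k (Ioi 0))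
    (hF : ∀ t, 0 ≤ F t) (hg : ∀ x, 0 < x → 0 < g x) (hb : ContinuousOn b (Ici 0))
    (hb0 : ∀ t, 0 ≤ t → 0 ≤ b t)
    (hbF : ∀ t, 0 ≤ t → b t = g (F t + ∫ a in Ioc 0 t, k a * b (t - a)))
    {p s : ℝ} (hp : 0 < p) (hbp : 0 < b p) (hs : 0 < s)
    (hsk : s ∈ (volume.restrict (Function.support k)).support) : 0 < b (p + s) := by
  rw [hbF _ (by positivity)]
  exact hg _ (add_pos_of_nonneg_of_pos (hF _)
    (setIntegral_Ioc_mul_comp_sub_pos hk0 hk hb hb0 hp hbp hs hsk))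

theorem volterra_eventually_pos {C L : ℝ} (hL : 0 ≤ L) (hk0 : ∀ a, 0 ≤ k a)
    (hkC : ∀ᵐ a ∂volume.restrict (Ioi 0), k a ≤ C) (hk : IntegrableOn k (Ioi 0))
    (hkpos : 0 < volume (Function.support k ∩ Ioi 0)) (hF : ∀ t, 0 ≤ F t)
    (hg0 : ∀ x, 0 ≤ x → 0 ≤ g x) (hgpos : ∀ x, 0 < x → 0 < g x)
    (hgL : ∀ x ∈ Icc (-1) 0, L * x ≤ g x) (hb : ContinuousOn b (Ici 0))
    (hbF : ∀ t, 0 ≤ t → b t = g (F t + ∫ a in Ioc 0 t, k a * b (t - a)))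
    {p : ℝ} (hp : 0 < p) (hFp : 0 < F p) :
    ∀ᶠ t in atTop, 0 < b t := by
  have hb0 := volterra_nonneg hL hk0 hkC hk hF hg0 hgL hb hbF
  have hbp : 0 < b p := by
    rw [hbF p hp.le]
    exact hgpos _ (add_pos_of_pos_of_nonneg hFp (setIntegral_Ioc_mul_comp_sub_nonneg hk0 hb0 p))
  set P := {t | 0 < t ∧ 0 < b t}
  obtain ⟨ε, hε, hPε⟩ : ∃ ε > 0, Ioo (p - ε) (p + ε) ⊆ P := by
    have hP : P ∈ 𝓝 p := (lt_mem_nhds hp).and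
      ((hb.continuousAt (Ici_mem_nhds hp)).eventually (lt_mem_nhds hbp))
    obtain ⟨ε, hε, hball⟩ := Metric.mem_nhds_iff.mp hP
    exact ⟨ε, hε, by rwa [← Real.ball_eq_Ioo]⟩
  obtain ⟨c, hc0, hc⟩ := Measure.nonempty_inter_support_of_pos
    (μ := volume.restrict (Function.support k)) (s := Ioi 0)
    (by rwa [Measure.restrict_apply measurableSet_Ioi, inter_comm])
  have hδ : 0 < min c ε := lt_min hc0 hε
  obtain ⟨s, ⟨hs, hsδ⟩, s', ⟨hs', hs'δ⟩, hss'⟩ := Measure.exists_lt_mem_support_inter hc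
    (Ioo_mem_nhds (sub_lt_self c hδ) (lt_add_of_pos_right c hδ))
  have hs0 : 0 < s := by linarith [hsδ.1, min_le_left c ε]
  have hshift : ∀ s ∈ (volume.restrict (Function.support k)).support, 0 < s →
      ∀ t ∈ P, t + s ∈ P := fun s hsk hs t ⟨ht, hbt⟩ =>
    ⟨by positivity, volterra_pos_add_of_mem_support hk0 hk hF hgpos hb hb0 hbF ht hbt hs hsk⟩
  obtain ⟨T, hT⟩ := exists_Ioi_subset_of_add_mem hs0 hss'
    (by linarith [hsδ.1, hs'δ.2, min_le_right c ε]) hPε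
    fun t ht => ⟨hshift s hs hs0 t ht, hshift s' hs' (hs0.trans hss') t ht⟩
  exact (eventually_gt_atTop T).mono fun t ht => (hT ht).2

end Volterra

theorem setIntegral_Ioi_comp_add {E : Type*} [NormedAddCommGroup E] [NormedSpace ℝ E]
    (g : ℝ → E) (t : ℝ) : ∫ σ in Ioi 0, g (σ + t) = ∫ a in Ioi t, g a := by
  have := (measurePreserving_add_right volume t).setIntegral_preimage_emb
    (measurableEmbedding_addRight t) g (Ioi t)
  rwa [preimage_add_const_Ioi, sub_self] at this

theorem integrableOn_Ioi_comp_add_iff {E : Type*} [NormedAddCommGroup E] {g : ℝ → E} {t : ℝ} :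
    IntegrableOn (fun σ => g (σ + t)) (Ioi 0) ↔ IntegrableOn g (Ioi t) := by
  have := (measurePreserving_add_right volume t).integrableOn_comp_preimage
    (measurableEmbedding_addRight t) (f := g) (s := Ioi t)
  rwa [preimage_add_const_Ioi, sub_self] at this

theorem integrableOn_Ioi_mul_comp_sub {β u₀ : ℝ → ℝ} {C : ℝ} (hβ : Measurable β)
    (hβ0 : ∀ a, 0 ≤ β a) (hβC : ∀ᵐ a ∂volume.restrict (Ioi 0), β a ≤ C)
    (hu₀ : IntegrableOn u₀ (Ioi 0)) {t : ℝ} (ht : 0 ≤ t) :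
    IntegrableOn (fun a => β a * u₀ (a - t)) (Ioi t) := by
  have hshift : IntegrableOn (fun a => u₀ (a - t)) (Ioi t) :=
    integrableOn_Ioi_comp_add_iff.mp (by simpa only [add_sub_cancel_right] using hu₀)
  refine hshift.bdd_mul (c := C) hβ.aestronglyMeasurable ?_
  filter_upwards [ae_restrict_of_ae_restrict_of_subset (Ioi_subset_Ioi ht) hβC] with a ha
  rwa [Real.norm_of_nonneg (hβ0 a)]

theorem measurableSet_setOf_pos_setIntegral_Ioi {k : ℝ → ℝ} (hk0 : ∀ a, 0 ≤ k a)
    (hk : IntegrableOn k (Ioi 0)) : MeasurableSet {a : ℝ | 0 < a ∧ 0 < ∫ σ in Ioi a, k σ} := by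
  refine Set.OrdConnected.measurableSet ⟨fun x hx y hy z hz => ⟨hx.1.trans_le hz.1, ?_⟩⟩
  exact hy.2.trans_le (setIntegral_mono_set (hk.mono_set (Ioi_subset_Ioi (hx.1.trans_le hz.1).le))
    (ae_of_all _ hk0) (Ioi_subset_Ioi hz.2).eventuallyLE)

theorem exists_pos_setIntegral_Ioi_mul_comp_sub {β u₀ : ℝ → ℝ} {C : ℝ} (hβ : Measurable β)
    (hβ0 : ∀ a, 0 ≤ β a) (hβC : ∀ᵐ a ∂volume.restrict (Ioi 0), β a ≤ C)
    (hu₀ : IntegrableOn u₀ (Ioi 0)) (hu₀0 : ∀ a, 0 ≤ u₀ a) {S : Set ℝ} (hS : MeasurableSet S)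
    (hS0 : S ⊆ Ioi 0) (hSβ : ∀ σ ∈ S, 0 < volume (Function.support β ∩ Ioi σ))
    (hpos : 0 < ∫ a in S, u₀ a) : ∃ t > 0, 0 < ∫ a in Ioi t, β a * u₀ (a - t) := by
  obtain ⟨w, hw, huw⟩ := hu₀.aemeasurable
  have huw' : ∀ᵐ σ, σ ∈ Ioi 0 → u₀ σ = w σ := (ae_restrict_iff' measurableSet_Ioi).mp huw
  set A := S ∩ {σ | 0 < w σ}
  have hApos : 0 < volume A := by
    refine ((setIntegral_pos_iff_support_of_nonneg_ae (ae_of_all _ hu₀0)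
      (hu₀.mono_set hS0)).mp hpos).trans_le (measure_mono_ae ?_)
    filter_upwards [huw'] with σ hσ ⟨hσ0, hσS⟩
    refine ⟨hσS, ?_⟩
    show 0 < w σ
    rw [← hσ (hS0 hσS)]
    exact (hu₀0 σ).lt_of_ne' hσ0
  obtain ⟨t, ht, hAt⟩ := exists_pos_volume_inter_preimage_add
    (hS.inter (measurableSet_lt measurable_const hw)) (hβ (measurableSet_singleton 0).compl)
    hApos fun σ hσ => hSβ σ hσ.1
  refine ⟨t, ht, ?_⟩
  rw [← setIntegral_Ioi_comp_add]
  simp only [add_sub_cancel_right]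
  refine setIntegral_pos_of_ae_pos (ae_of_all _ fun σ => mul_nonneg (hβ0 _) (hu₀0 σ)) ?_
    (fun σ hσ => hS0 hσ.1.1) hAt ?_
  · simpa only [add_sub_cancel_right] using
      integrableOn_Ioi_comp_add_iff.mpr (integrableOn_Ioi_mul_comp_sub hβ hβ0 hβC hu₀ ht.le)
  · filter_upwards [huw'] with σ hσ ⟨⟨hσS, hwσ⟩, hβσ⟩
    rw [hσ (hS0 hσS)]
    exact mul_pos ((hβ0 _).lt_of_ne' hβσ) hwσ

theorem setIntegral_Ioi_mul_eq_add {μ : ℝ} {β u₀ b : ℝ → ℝ} {u : ℝ → ℝ → ℝ} {C : ℝ}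
    (hβ : Measurable β) (hβ0 : ∀ a, 0 ≤ β a) (hβC : ∀ᵐ a ∂volume.restrict (Ioi 0), β a ≤ C)
    (hk : IntegrableOn (fun a => β a * Real.exp (-μ * a)) (Ioi 0))
    (hu₀ : IntegrableOn u₀ (Ioi 0)) (hb : ContinuousOn b (Ici 0))
    (hu : ∀ t a, u t a = if t ≤ a then Real.exp (-μ * t) * u₀ (a - t)
                         else Real.exp (-μ * a) * b (t - a))
    {t : ℝ} (ht : 0 < t) :
    ∫ a in Ioi 0, β a * u t a = Real.exp (-μ * t) * (∫ a in Ioi t, β a * u₀ (a - t))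
      + ∫ a in Ioc 0 t, β a * Real.exp (-μ * a) * b (t - a) := by
  have hold : ∀ a ∈ Ici t, β a * u t a = Real.exp (-μ * t) * (β a * u₀ (a - t)) :=
    fun a (ha : t ≤ a) => by rw [hu, if_pos ha]; ring
  have hyoung : ∀ a ∈ Ioo 0 t, β a * u t a = β a * Real.exp (-μ * a) * b (t - a) :=
    fun a ha => by rw [hu, if_neg ha.2.not_ge]; ring
  have hint_old : IntegrableOn (fun a => Real.exp (-μ * t) * (β a * u₀ (a - t))) (Ici t) :=
    (integrableOn_Ici_iff_integrableOn_Ioi).mpr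
      ((integrableOn_Ioi_mul_comp_sub hβ hβ0 hβC hu₀ ht.le).const_mul _)
  have hint_young : IntegrableOn (fun a => β a * Real.exp (-μ * a) * b (t - a)) (Ioo 0 t) :=
    (integrableOn_Ioc_mul_comp_sub hk hb t).mono_set Ioo_subset_Ioc_self
  rw [← Ioo_union_Ici_eq_Ioi ht, setIntegral_union
      (disjoint_left.mpr fun a ha ha' => ha.2.not_ge ha') measurableSet_Ici
      (hint_young.congr_fun (fun a ha => (hyoung a ha).symm) measurableSet_Ioo)
      (hint_old.congr_fun (fun a ha => (hold a ha).symm) measurableSet_Ici),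
    setIntegral_congr_fun measurableSet_Ioo hyoung, setIntegral_congr_fun measurableSet_Ici hold,
    integral_Ici_eq_integral_Ioi, integral_const_mul, integral_Ioc_eq_integral_Ioo, add_comm]

theorem exp_one_mul_le_mul_exp_neg {x : ℝ} (hx : x ∈ Icc (-1) 0) :
    Real.exp 1 * x ≤ x * Real.exp (-x) := by
  have := Real.exp_le_exp.mpr (show -x ≤ 1 by linarith [hx.1])
  nlinarith [hx.2]

/-- The set `{a > 0 | ∫_a^∞ β(σ) e^{-μσ} dσ > 0}` in `hu₀pos` is the interval `(0, a*)`, as the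
tail integral is nonincreasing. -/
theorem gurtin_maccamy_eventual_positivity
    (μ α : ℝ) (hμ : 0 < μ) (hα : 0 < α)
    (f : ℝ → ℝ) (hf : ∀ x, f x = x * Real.exp (-x))
    (β : ℝ → ℝ) (hβmeas : Measurable β) (hβnonneg : ∀ a, 0 ≤ β a)
    (hβbdd : ∃ C : ℝ, ∀ᵐ a ∂(volume.restrict (Set.Ioi 0)), β a ≤ C)
    (hβnorm : (∫ a in Set.Ioi (0:ℝ), β a * Real.exp (-μ * a)) = 1)
    (u₀ : ℝ → ℝ) (hu₀int : IntegrableOn u₀ (Set.Ioi 0))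
    (hu₀nonneg : ∀ a, 0 ≤ u₀ a)
    (b : ℝ → ℝ) (hbcont : ContinuousOn b (Set.Ici 0))
    (hb : ∀ t, 0 ≤ t →
      b t = α * f (Real.exp (-μ * t) * (∫ a in Set.Ioi t, β a * u₀ (a - t))
        + ∫ a in (0:ℝ)..t, β a * Real.exp (-μ * a) * b (t - a)))
    (u : ℝ → ℝ → ℝ)
    (hu : ∀ t a, u t a = if t ≤ a then Real.exp (-μ * t) * u₀ (a - t)
                         else Real.exp (-μ * a) * b (t - a))
    (hu₀pos :
      0 < ∫ a in {a : ℝ | 0 < a ∧ 0 < ∫ σ in Set.Ioi a, β σ * Real.exp (-μ * σ)}, u₀ a) :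
    ∃ t₀ > (0:ℝ), ∀ t, t₀ ≤ t →
      (0 < ∫ a in Set.Ioi (0:ℝ), β a * u t a) ∧ 0 < b t := by
  obtain rfl : f = fun x => x * Real.exp (-x) := funext hf
  obtain ⟨C, hC⟩ := hβbdd
  set k : ℝ → ℝ := fun a => β a * Real.exp (-μ * a)
  set F : ℝ → ℝ := fun t => Real.exp (-μ * t) * ∫ a in Ioi t, β a * u₀ (a - t)
  set g : ℝ → ℝ := fun x => α * (x * Real.exp (-x))
  have hk0 : ∀ a, 0 ≤ k a := fun a => mul_nonneg (hβnonneg a) (Real.exp_pos _).le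
  have hk : IntegrableOn k (Ioi 0) := Integrable.of_integral_ne_zero (hβnorm ▸ one_ne_zero)
  have hkC : ∀ᵐ a ∂volume.restrict (Ioi 0), k a ≤ C := by
    filter_upwards [hC, ae_restrict_mem measurableSet_Ioi] with a ha (ha0 : 0 < a)
    exact (mul_le_of_le_one_right (hβnonneg a) (Real.exp_le_one_iff.mpr (by nlinarith))).trans ha
  have hF : ∀ t, 0 ≤ F t := fun t => mul_nonneg (Real.exp_pos _).le
    (setIntegral_nonneg measurableSet_Ioi fun a _ => mul_nonneg (hβnonneg a) (hu₀nonneg _))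
  have hbF : ∀ t, 0 ≤ t → b t = g (F t + ∫ a in Ioc 0 t, k a * b (t - a)) := fun t ht => by
    rw [hb t ht, intervalIntegral.integral_of_le ht]
  obtain ⟨p, hp, hFp⟩ := exists_pos_setIntegral_Ioi_mul_comp_sub hβmeas hβnonneg hC hu₀int
    hu₀nonneg (measurableSet_setOf_pos_setIntegral_Ioi hk0 hk) (fun a ha => ha.1)
    (fun σ hσ => (measure_support_inter_pos_of_setIntegral_pos hk0 hσ.2).trans_le
      (measure_mono (inter_subset_inter_left _ fun a ha => left_ne_zero_of_mul ha))) hu₀pos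
  obtain ⟨T, hT⟩ := (volterra_eventually_pos (L := α * Real.exp 1) (by positivity) hk0 hkC hk
    (measure_support_inter_pos_of_setIntegral_pos hk0 (hβnorm ▸ one_pos)) hF
    (fun x hx => by positivity) (fun x hx => by positivity)
    (fun x hx => by nlinarith [exp_one_mul_le_mul_exp_neg hx]) hbcont hbF hp
    (mul_pos (Real.exp_pos _) hFp)).exists_forall_of_atTop
  refine ⟨max T 1, by positivity, fun t ht => ⟨?_, hT t (le_of_max_le_left ht)⟩⟩
  have ht0 : 0 < t := by linarith [le_max_right T 1]
  have hbt := hT t (le_of_max_le_left ht)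
  rw [hbF t ht0.le] at hbt
  rw [setIntegral_Ioi_mul_eq_add hβmeas hβnonneg hC hk hu₀int hbcont hu ht0]
  exact pos_of_mul_pos_left (pos_of_mul_pos_right hbt hα.le) (Real.exp_pos _).le
end

section
/- Assume 1 < α ≤ e². Then for every u ≥ 0 one has |α·u·exp(−u) − ln α| ≤ |u − ln α|, and the inequality is strict whenever u ≠ 0 and u ≠ ln α. -/
/-!
Write `L = ln α ≤ 2`, so that `α u e^{-u} = u e^{L - u}`. For `u > 0` on either side of `L`,
one of the two bounds `-|u - L| < u e^{L-u} - L < |u - L|` only compares `e^{±t}` with 1, and the other,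
after clearing `e^{±t}` with `t = |u - L|`, reduces to `(L - t) e^t < L + t`. Since `L ≤ 2` this
follows from `2 (e^t - 1) < t (e^t + 1)`, i.e. `tanh (t/2) < t/2`.
-/

open Real

lemma one_add_sub_one_mul_exp_pos {x : ℝ} (hx : x ≠ 0) : 0 < 1 + (x - 1) * exp x := by
  have h := mul_lt_mul_of_pos_right (one_sub_lt_exp_neg hx) (exp_pos x)
  rw [← exp_add, neg_add_cancel, exp_zero] at h
  linarith

lemma two_mul_exp_sub_one_lt {t : ℝ} (ht : 0 < t) : 2 * (exp t - 1) < t * (exp t + 1) := by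
  let f : ℝ → ℝ := fun s ↦ s * (exp s + 1) - 2 * (exp s - 1)
  have hf' (s : ℝ) : HasDerivAt f (1 + (s - 1) * exp s) s :=
    (((hasDerivAt_id' s).mul ((hasDerivAt_exp s).add_const 1)).sub
      (((hasDerivAt_exp s).sub_const 1).const_mul 2)).congr_deriv (by ring)
  have hmono : StrictMonoOn f (Set.Ici 0) :=
    strictMonoOn_of_hasDerivWithinAt_pos (convex_Ici 0)
      (fun s _ ↦ (hf' s).continuousAt.continuousWithinAt)
      (fun s _ ↦ (hf' s).hasDerivWithinAt)
      (fun s hs ↦ one_add_sub_one_mul_exp_pos (by rw [interior_Ici] at hs; exact hs.ne'))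
  have := hmono Set.self_mem_Ici ht.le ht
  simp only [f, exp_zero] at this
  linarith

lemma sub_mul_exp_lt_add {L t : ℝ} (hL : L ≤ 2) (ht : 0 < t) : (L - t) * exp t < L + t := by
  have h1 : 1 < exp t := one_lt_exp_iff.2 ht
  nlinarith [two_mul_exp_sub_one_lt ht]

lemma abs_mul_exp_sub_sub_lt {L u : ℝ} (hL : L ≤ 2) (hu : 0 < u) (huL : u ≠ L) :
    |u * exp (L - u) - L| < |u - L| := by
  rcases huL.lt_or_gt with hlt | hgt
  · have hexp : 1 < exp (L - u) := one_lt_exp_iff.2 (sub_pos.2 hlt)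
    have hcore := sub_mul_exp_lt_add hL (sub_pos.2 hlt)
    rw [sub_sub_cancel] at hcore
    rw [abs_of_neg (sub_neg.2 hlt), abs_lt]
    exact ⟨by nlinarith, by linarith⟩
  · have hexp : exp (L - u) < 1 := exp_lt_one_iff.2 (sub_neg.2 hgt)
    have hcore := sub_mul_exp_lt_add hL (sub_pos.2 hgt)
    have hinv : exp (u - L) * exp (L - u) = 1 := by
      rw [← exp_add, sub_add_sub_cancel, sub_self, exp_zero]
    have hlower : L - (u - L) < u * exp (L - u) := by
      nlinarith [mul_lt_mul_of_pos_right hcore (exp_pos (L - u))]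
    rw [abs_of_pos (sub_pos.2 hgt), abs_lt]
    exact ⟨by linarith, by nlinarith⟩

/-- (Fisher–Goh inequality.) If `1 < α ≤ e²`, then for every
`u ≥ 0` one has `|α u e^{-u} - ln α| ≤ |u - ln α|`, with strict inequality whenever
`u ≠ 0` and `u ≠ ln α`. -/
theorem fisher_goh_inequality
    (α : ℝ) (hα1 : 1 < α) (hα2 : α ≤ Real.exp 2) :
    ∀ u : ℝ, 0 ≤ u →
      |α * (u * Real.exp (-u)) - Real.log α| ≤ |u - Real.log α| ∧
      (u ≠ 0 → u ≠ Real.log α →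
        |α * (u * Real.exp (-u)) - Real.log α| < |u - Real.log α|) := by
  intro u hu
  have hα0 : 0 < α := one_pos.trans hα1
  have hL : log α ≤ 2 := by simpa using log_le_log hα0 hα2
  have hmap : α * (u * exp (-u)) = u * exp (log α - u) := by
    rw [sub_eq_add_neg, exp_add, exp_log hα0]
    ring
  have hstrict (hu0 : u ≠ 0) (huL : u ≠ log α) : |u * exp (log α - u) - log α| < |u - log α| :=
    abs_mul_exp_sub_sub_lt hL (hu.lt_of_ne' hu0) huL
  rw [hmap]
  refine ⟨?_, hstrict⟩
  by_cases hu0 : u = 0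
  · simp [hu0]
  by_cases huL : u = log α
  · simp [huL]
  exact (hstrict hu0 huL).le
end

section
/- Assume 1 < α ≤ e² and let b : ℝ → [0,∞) be a continuous function satisfying the renewal equation b(t) = α·f( ∫₀^∞ β(a)·exp(−μa)·b(t−a) da ) for all t ∈ ℝ. Then, with g(x) = (x−1)², for every t ∈ ℝ one has g( b(t)/ln α ) ≤ ∫₀^∞ β(a)·exp(−μa)·g( b(t−a)/ln α ) da. -/
/-!
Write `w(a) = β(a) e^{-μa}`, a probability density on `(0, ∞)`, `L = ln α ∈ (0, 2]` and
`I = ∫ w(a) b(t - a) da ≥ 0`, so that `b(t) = I e^{L - I}`. For `L ≤ 2` the map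
`y ↦ y e^{L - y} + y` is nondecreasing; comparing it with its value `2L` at `y = L` shows that
the Ricker map `x ↦ x e^{L - x}` moves no point `x ≥ 0` farther from its fixed point `L`. Hence
`g(b(t)/L) ≤ g(I/L)`, and `g(I/L) ≤ ∫ w(a) g(b(t - a)/L) da` is Jensen's inequality for the
convex `g`.
-/

open MeasureTheory

theorem sq_integral_mul_sub_le_integral_mul_sq_sub {X : Type*} [MeasurableSpace X]
    {ν : Measure X} {w φ : X → ℝ} {B : ℝ} (hw0 : ∀ᵐ x ∂ν, 0 ≤ w x)
    (hw1 : ∫ x, w x ∂ν = 1) (hφm : AEStronglyMeasurable φ ν) (hφB : ∀ᵐ x ∂ν, ‖φ x‖ ≤ B)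
    (c : ℝ) :
    (∫ x, w x * φ x ∂ν - c) ^ 2 ≤ ∫ x, w x * (φ x - c) ^ 2 ∂ν := by
  have hw : Integrable w ν := .of_integral_ne_zero (by simp [hw1])
  have hwφ : Integrable (fun x => w x * φ x) ν := hw.mul_bdd hφm hφB
  have hwφc : Integrable (fun x => w x * (φ x - c) ^ 2) ν := by
    refine hw.mul_bdd (c := (B + |c|) ^ 2) ((hφm.sub aestronglyMeasurable_const).pow 2) ?_
    filter_upwards [hφB] with x hx
    rw [norm_pow, Real.norm_eq_abs]
    gcongr
    exact (abs_sub _ _).trans (by rw [← Real.norm_eq_abs]; gcongr)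
  set m := ∫ x, w x * φ x ∂ν
  -- integrate the supporting line of the parabola `(· - c) ^ 2` at `m`
  calc (m - c) ^ 2
      = ∫ x, ((m - c) ^ 2 - 2 * (m - c) * m) * w x + 2 * (m - c) * (w x * φ x) ∂ν := by
        rw [integral_add (hw.const_mul _) (hwφ.const_mul _), integral_const_mul,
          integral_const_mul, hw1]
        ring
    _ ≤ ∫ x, w x * (φ x - c) ^ 2 ∂ν := by
        refine integral_mono_ae ((hw.const_mul _).add (hwφ.const_mul _)) hwφc ?_
        filter_upwards [hw0] with x hx
        nlinarith [mul_nonneg hx (sq_nonneg (φ x - m))]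

theorem monotone_mul_exp_sub_add {L : ℝ} (hL : L ≤ 2) :
    Monotone fun y => y * Real.exp (L - y) + y := by
  refine monotone_of_hasDerivAt_nonneg (f' := fun y => Real.exp (L - y) * (1 - y) + 1)
    (fun y => ?_) (fun y => ?_)
  · refine (((hasDerivAt_id' y).fun_mul ((hasDerivAt_id' y).const_sub L).exp).fun_add
      (hasDerivAt_id' y)).congr_deriv ?_
    ring
  · -- `exp (y - L) ≥ y - L + 1 ≥ y - 1`
    show (0 : ℝ) ≤ Real.exp (L - y) * (1 - y) + 1
    have hexp : Real.exp (L - y) * Real.exp (y - L) = 1 := by rw [← Real.exp_add]; simp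
    have := mul_le_mul_of_nonneg_left (Real.add_one_le_exp (y - L)) (Real.exp_pos (L - y)).le
    nlinarith [mul_nonneg (Real.exp_pos (L - y)).le (sub_nonneg.2 hL)]

theorem abs_mul_exp_sub_sub_le {L x : ℝ} (hL : L ≤ 2) (hx : 0 ≤ x) :
    |x * Real.exp (L - x) - L| ≤ |x - L| := by
  have hψ := monotone_mul_exp_sub_add hL
  rcases le_total x L with h | h
  · have h₁ := hψ h
    have h₂ : x ≤ x * Real.exp (L - x) :=
      le_mul_of_one_le_right hx (Real.one_le_exp (sub_nonneg.2 h))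
    simp only [sub_self, Real.exp_zero, mul_one] at h₁
    rw [abs_of_nonpos (sub_nonpos.2 h)]
    exact abs_le.2 ⟨by linarith, by linarith⟩
  · have h₁ := hψ h
    have h₂ : x * Real.exp (L - x) ≤ x :=
      mul_le_of_le_one_right hx (Real.exp_le_one_iff.2 (sub_nonpos.2 h))
    simp only [sub_self, Real.exp_zero, mul_one] at h₁
    rw [abs_of_nonneg (sub_nonneg.2 h)]
    exact abs_le.2 ⟨by linarith, by linarith⟩

theorem gurtin_maccamy_lyapunov_inequality_general
    (μ α : ℝ) (hα1 : 1 < α) (hα2 : α ≤ Real.exp 2)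
    (f : ℝ → ℝ) (hf : ∀ x, f x = x * Real.exp (-x))
    (β : ℝ → ℝ) (hβnonneg : ∀ a, 0 ≤ β a)
    (hβnorm : (∫ a in Set.Ioi (0:ℝ), β a * Real.exp (-μ * a)) = 1)
    (b : ℝ → ℝ) (hbcont : Continuous b) (hbnonneg : ∀ t, 0 ≤ b t)
    (hrenewal : ∀ t : ℝ,
      b t = α * f (∫ a in Set.Ioi (0:ℝ), β a * Real.exp (-μ * a) * b (t - a)))
    (g : ℝ → ℝ) (hg : ∀ x, g x = (x - 1) ^ 2) :
    ∀ t : ℝ,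
      g (b t / Real.log α)
        ≤ ∫ a in Set.Ioi (0:ℝ), β a * Real.exp (-μ * a) * g (b (t - a) / Real.log α) := by
  intro t
  obtain rfl : f = fun x => x * Real.exp (-x) := funext hf
  obtain rfl : g = fun x => (x - 1) ^ 2 := funext hg
  set L := Real.log α
  have hL : 0 < L := Real.log_pos hα1
  have hL2 : L ≤ 2 := by simpa using Real.log_le_log (by linarith) hα2
  have hb_le : ∀ s, b s ≤ α := fun s => by
    rw [hrenewal s]
    refine mul_le_of_le_one_right (by linarith) ((Real.mul_exp_neg_le_exp_neg_one _).trans ?_)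
    exact Real.exp_le_one_iff.2 (by norm_num)
  set I := ∫ a in Set.Ioi (0:ℝ), β a * Real.exp (-μ * a) * b (t - a)
  have hI : 0 ≤ I := setIntegral_nonneg measurableSet_Ioi fun a _ =>
    mul_nonneg (mul_nonneg (hβnonneg a) (Real.exp_pos _).le) (hbnonneg _)
  have hbt : b t = I * Real.exp (L - I) := by
    rw [hrenewal t]
    show α * (I * Real.exp (-I)) = _
    rw [Real.exp_sub, Real.exp_log (by linarith), Real.exp_neg]
    field_simp
  calc (b t / L - 1) ^ 2
      = (b t - L) ^ 2 / L ^ 2 := by rw [div_sub_one hL.ne', div_pow]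
    _ ≤ (I - L) ^ 2 / L ^ 2 := by
        rw [hbt]
        gcongr ?_ / _
        exact sq_le_sq.2 (abs_mul_exp_sub_sub_le hL2 hI)
    _ = ((∫ a in Set.Ioi (0:ℝ), β a * Real.exp (-μ * a) * (b (t - a) / L)) - 1) ^ 2 := by
        simp_rw [← mul_div_assoc]
        rw [integral_div, div_sub_one hL.ne', div_pow]
    _ ≤ _ := by
        refine sq_integral_mul_sub_le_integral_mul_sq_sub (B := α / L)
          (.of_forall fun a => ?_) hβnorm ?_ (.of_forall fun a => ?_) 1
        · exact mul_nonneg (hβnonneg a) (Real.exp_pos _).le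
        · exact ((hbcont.comp (continuous_sub_left t)).div_const L).aestronglyMeasurable
        · rw [Real.norm_eq_abs, abs_of_nonneg (div_nonneg (hbnonneg _) hL.le)]
          exact div_le_div_of_nonneg_right (hb_le _) hL.le

/-- Key Lyapunov inequality along a complete orbit: if `1 < α ≤ e²`
and `b ≥ 0` satisfies the renewal equation, then with `g(x) = (x-1)²`,
`g(b(t)/ln α) ≤ ∫₀^∞ β(a) e^{-μa} g(b(t-a)/ln α) da` for all `t ∈ ℝ`. -/
theorem gurtin_maccamy_lyapunov_inequality
    (μ α : ℝ) (hμ : 0 < μ) (hα1 : 1 < α) (hα2 : α ≤ Real.exp 2)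
    (f : ℝ → ℝ) (hf : ∀ x, f x = x * Real.exp (-x))
    (β : ℝ → ℝ) (hβmeas : Measurable β) (hβnonneg : ∀ a, 0 ≤ β a)
    (hβbdd : ∃ C : ℝ, ∀ᵐ a ∂(volume.restrict (Set.Ioi 0)), β a ≤ C)
    (hβnorm : (∫ a in Set.Ioi (0:ℝ), β a * Real.exp (-μ * a)) = 1)
    (b : ℝ → ℝ) (hbcont : Continuous b) (hbnonneg : ∀ t, 0 ≤ b t)
    (hrenewal : ∀ t : ℝ,
      b t = α * f (∫ a in Set.Ioi (0:ℝ), β a * Real.exp (-μ * a) * b (t - a)))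
    (g : ℝ → ℝ) (hg : ∀ x, g x = (x - 1) ^ 2) :
    ∀ t : ℝ,
      g (b t / Real.log α)
        ≤ ∫ a in Set.Ioi (0:ℝ), β a * Real.exp (-μ * a) * g (b (t - a) / Real.log α) :=
  gurtin_maccamy_lyapunov_inequality_general μ α hα1 hα2 f hf β hβnonneg hβnorm b hbcont hbnonneg
    hrenewal g hg
end

section
/- Assume 1 < α ≤ e² and let b : ℝ → ℝ be a continuous function satisfying the renewal equation b(t) = α·f( ∫₀^∞ β(a)·exp(−μa)·b(t−a) da ) for all t ∈ ℝ, and suppose there exists δ⁻ > 0 with b(t) ≥ δ⁻ for all t ∈ ℝ. Then b(t) = ln α for every t ∈ ℝ. -/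
/-!
Let `m ≤ M` be the infimum and supremum of `b` and `G x = α x e^{-x} = x e^{s-x}` with
`s = log α`. The integral in the renewal equation is an average of values of `b`, so it lies in
`[m, M]`, and hence `[m, M] ⊆ G [m, M]`. Since `G` increases on `(-∞, 1]`, decreases on
`[1, ∞)` and has `s` as its only positive fixed point, this interval must be `{s}`. When
`1 ≤ m < s` this uses `G (G m) ≤ m` against the monotonicity of `x + G x` on `[1, 2]`, and the
case `m < 1 < M` is excluded because `G (e^{s-1}) ≥ 1`; both need `s ≤ 2`, i.e. `α ≤ e²`.
-/

open MeasureTheory Real Set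

/-- `rickerMap (log α)` is the map `x ↦ α x e^{-x}` of the renewal equation. -/
noncomputable def rickerMap (s x : ℝ) : ℝ := x * exp (s - x)

section RickerMap

variable {s x : ℝ}

lemma mul_mul_exp_neg_eq_rickerMap {α : ℝ} (hα : 0 < α) (x : ℝ) :
    α * (x * exp (-x)) = rickerMap (log α) x := by
  rw [rickerMap, sub_eq_add_neg, exp_add, exp_log hα]
  ring

@[simp] lemma rickerMap_zero (s : ℝ) : rickerMap s 0 = 0 := zero_mul _

@[simp] lemma rickerMap_self (s : ℝ) : rickerMap s s = s := by simp [rickerMap]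

lemma rickerMap_le_exp_sub_one (s x : ℝ) : rickerMap s x ≤ exp (s - 1) :=
  calc x * exp (s - x) ≤ exp (x - 1) * exp (s - x) := by
        gcongr
        linarith [add_one_le_exp (x - 1)]
    _ = exp (s - 1) := by rw [← exp_add]; ring_nf

lemma rickerMap_rickerMap (s x : ℝ) :
    rickerMap s (rickerMap s x) = x * exp (2 * s - (x + rickerMap s x)) := by
  rw [rickerMap, rickerMap, mul_assoc, ← exp_add]
  ring_nf

lemma le_rickerMap_iff (hx : 0 < x) : x ≤ rickerMap s x ↔ x ≤ s := by
  rw [rickerMap, le_mul_iff_one_le_right hx, one_le_exp_iff, sub_nonneg]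

lemma lt_rickerMap_iff (hx : 0 < x) : x < rickerMap s x ↔ x < s := by
  rw [rickerMap, lt_mul_iff_one_lt_right hx, one_lt_exp_iff, sub_pos]

lemma rickerMap_le_iff (hx : 0 < x) : rickerMap s x ≤ x ↔ s ≤ x := by
  simpa only [not_lt] using (lt_rickerMap_iff hx).not

lemma hasDerivAt_rickerMap (s x : ℝ) :
    HasDerivAt (rickerMap s) ((1 - x) * exp (s - x)) x := by
  have h := (hasDerivAt_id' x).mul ((hasDerivAt_id' x).const_sub s).exp
  exact h.congr_deriv (by ring)

lemma continuous_rickerMap (s : ℝ) : Continuous (rickerMap s) :=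
  continuous_iff_continuousAt.2 fun x => (hasDerivAt_rickerMap s x).continuousAt

lemma monotoneOn_rickerMap (s : ℝ) : MonotoneOn (rickerMap s) (Iic 1) := by
  refine monotoneOn_of_deriv_nonneg (convex_Iic 1) (continuous_rickerMap s).continuousOn
    (fun x _ => (hasDerivAt_rickerMap s x).differentiableAt.differentiableWithinAt) fun x hx => ?_
  rw [interior_Iic] at hx
  rw [(hasDerivAt_rickerMap s x).deriv]
  exact mul_nonneg (sub_nonneg.2 (le_of_lt hx)) (exp_pos _).le

lemma antitoneOn_rickerMap (s : ℝ) : AntitoneOn (rickerMap s) (Ici 1) := by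
  refine antitoneOn_of_deriv_nonpos (convex_Ici 1) (continuous_rickerMap s).continuousOn
    (fun x _ => (hasDerivAt_rickerMap s x).differentiableAt.differentiableWithinAt) fun x hx => ?_
  rw [interior_Ici] at hx
  rw [(hasDerivAt_rickerMap s x).deriv]
  exact mul_nonpos_of_nonpos_of_nonneg (sub_nonpos.2 (le_of_lt hx)) (exp_pos _).le

lemma strictMonoOn_add_rickerMap (hs : s ≤ 2) :
    StrictMonoOn (fun x => x + rickerMap s x) (Icc 1 2) := by
  have hd : ∀ x, HasDerivAt (fun x => x + rickerMap s x) (1 + (1 - x) * exp (s - x)) x :=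
    fun x => (hasDerivAt_id x).add (hasDerivAt_rickerMap s x)
  refine strictMonoOn_of_deriv_pos (convex_Icc 1 2)
    (continuous_id.add (continuous_rickerMap s)).continuousOn fun x hx => ?_
  rw [interior_Icc] at hx
  rw [(hd x).deriv]
  -- `x - 1 < e^{x-2}` for `x ≠ 2`, so `(x - 1) e^{s-x} < e^{s-2} ≤ 1`
  have hx1 : x - 1 < exp (x - 2) := by linarith [add_one_lt_exp (sub_ne_zero.2 hx.2.ne)]
  have : (x - 1) * exp (s - x) < 1 :=
    calc (x - 1) * exp (s - x) < exp (x - 2) * exp (s - x) := by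
          gcongr
      _ = exp (s - 2) := by rw [← exp_add]; ring_nf
      _ ≤ 1 := exp_le_one_iff.2 (by linarith)
  linarith

lemma one_le_rickerMap_exp_sub_one (hs1 : 1 ≤ s) (hs2 : s ≤ 2) :
    1 ≤ rickerMap s (exp (s - 1)) := by
  have h : exp (s - 1) - 1 ≤ 2 * (s - 1) := by
    have := abs_exp_sub_one_le (x := s - 1) (by rw [abs_le]; constructor <;> linarith)
    rw [abs_of_nonneg (by linarith : 0 ≤ s - 1)] at this
    exact (le_abs_self _).trans this
  rw [rickerMap, ← exp_add, one_le_exp_iff]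
  linarith

end RickerMap

section InvariantInterval

variable {s m M : ℝ}

lemma eq_of_Icc_subset_image_rickerMap_of_le_one (hm0 : 0 < m) (hmM : m ≤ M) (hM1 : M ≤ 1)
    (h : Icc m M ⊆ rickerMap s '' Icc m M) : m = s ∧ M = s := by
  have hmono : MonotoneOn (rickerMap s) (Icc m M) :=
    (monotoneOn_rickerMap s).mono (Icc_subset_Iic_self.trans (Iic_subset_Iic.2 hM1))
  obtain ⟨x, hx, hxM⟩ := h (right_mem_Icc.2 hmM)
  obtain ⟨y, hy, hym⟩ := h (left_mem_Icc.2 hmM)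
  have hMs : M ≤ s := (le_rickerMap_iff (hm0.trans_le hmM)).1
    (hxM.symm.trans_le (hmono hx (right_mem_Icc.2 hmM) hx.2))
  have hsm : s ≤ m := (rickerMap_le_iff hm0).1 ((hmono (left_mem_Icc.2 hmM) hy hy.1).trans_eq hym)
  constructor <;> linarith

lemma not_Icc_subset_image_rickerMap (hs2 : s ≤ 2) (hm0 : 0 < m) (hm1 : m < 1) (hM1 : 1 < M)
    (h : Icc m M ⊆ rickerMap s '' Icc m M) : False := by
  have hmM : m ≤ M := by linarith
  obtain ⟨x, -, hxM⟩ := h (right_mem_Icc.2 hmM)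
  have hMe : M ≤ exp (s - 1) := hxM.symm.trans_le (rickerMap_le_exp_sub_one s x)
  have hs1 : 1 < s := by
    have := hM1.trans_le hMe
    rwa [one_lt_exp_iff, sub_pos] at this
  obtain ⟨y, hy, hym⟩ := h (left_mem_Icc.2 hmM)
  rcases le_total y 1 with hy1 | hy1
  · have h1 : m < rickerMap s m := (lt_rickerMap_iff hm0).2 (hm1.trans hs1)
    have h2 := monotoneOn_rickerMap s (mem_Iic.2 hm1.le) (mem_Iic.2 hy1) hy.1
    linarith
  · have h1 : 1 ≤ rickerMap s (exp (s - 1)) := one_le_rickerMap_exp_sub_one hs1.le hs2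
    have h2 := antitoneOn_rickerMap s (mem_Ici.2 hy1) (mem_Ici.2 (hM1.le.trans hMe))
      (hy.2.trans hMe)
    linarith

lemma eq_of_Icc_subset_image_rickerMap_of_one_le (hs2 : s ≤ 2) (hm1 : 1 ≤ m) (hmM : m ≤ M)
    (h : Icc m M ⊆ rickerMap s '' Icc m M) : m = s ∧ M = s := by
  have hanti : AntitoneOn (rickerMap s) (Icc m M) :=
    (antitoneOn_rickerMap s).mono (Icc_subset_Ici_self.trans (Ici_subset_Ici.2 hm1))
  obtain ⟨x, hx, hxM⟩ := h (right_mem_Icc.2 hmM)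
  obtain ⟨y, hy, hym⟩ := h (left_mem_Icc.2 hmM)
  have hMG : M ≤ rickerMap s m := hxM.symm.trans_le (hanti (left_mem_Icc.2 hmM) hx hx.1)
  have hGM : rickerMap s M ≤ m := (hanti hy (right_mem_Icc.2 hmM) hy.2).trans_eq hym
  have hm0 : 0 < m := one_pos.trans_le hm1
  have hms : m ≤ s := (le_rickerMap_iff hm0).1 (hmM.trans hMG)
  have hsm : s ≤ m := by
    by_contra! hlt
    -- `G (G m) ≤ m`, whereas `m + G m < s + G s = 2 s` forces `G (G m) > m`
    have hGG : rickerMap s (rickerMap s m) ≤ m :=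
      (antitoneOn_rickerMap s (hm1.trans hmM) ((hm1.trans hmM).trans hMG) hMG).trans hGM
    have hsum : m + rickerMap s m < 2 * s := by
      simpa [two_mul] using
        strictMonoOn_add_rickerMap hs2 ⟨hm1, hms.trans hs2⟩ ⟨hm1.trans hms, hs2⟩ hlt
    rw [rickerMap_rickerMap] at hGG
    have hexp : 1 < exp (2 * s - (m + rickerMap s m)) := one_lt_exp_iff.2 (by linarith)
    linarith [lt_mul_of_one_lt_right hm0 hexp]
  obtain rfl : m = s := le_antisymm hms hsm
  exact ⟨rfl, le_antisymm (by simpa using hMG) hmM⟩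

theorem eq_of_Icc_subset_image_rickerMap (hs2 : s ≤ 2) (hm0 : 0 < m) (hmM : m ≤ M)
    (h : Icc m M ⊆ rickerMap s '' Icc m M) : m = s ∧ M = s := by
  rcases le_or_gt M 1 with hM1 | hM1
  · exact eq_of_Icc_subset_image_rickerMap_of_le_one hm0 hmM hM1 h
  rcases lt_or_ge m 1 with hm1 | hm1
  · exact (not_Icc_subset_image_rickerMap hs2 hm0 hm1 hM1 h).elim
  · exact eq_of_Icc_subset_image_rickerMap_of_one_le hs2 hm1 hmM h

end InvariantInterval

lemma Icc_csInf_csSup_subset_image_Icc {α β : Type*}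
    [ConditionallyCompleteLinearOrder α] [TopologicalSpace α] [OrderTopology α] [DenselyOrdered α]
    [ConditionallyCompleteLinearOrder β] [TopologicalSpace β] [OrderTopology β]
    {g : α → β} (hg : Continuous g) {a b : α} {S : Set β} (hS : S.Nonempty)
    (hSg : S ⊆ g '' Icc a b) : Icc (sInf S) (sSup S) ⊆ g '' Icc a b := by
  have hK : IsCompact (g '' Icc a b) := isCompact_Icc.image hg
  exact (isPreconnected_Icc.image g hg.continuousOn).Icc_subset
    (closure_minimal hSg hK.isClosed (csInf_mem_closure hS (hK.bddBelow.mono hSg)))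
    (closure_minimal hSg hK.isClosed (csSup_mem_closure hS (hK.bddAbove.mono hSg)))

theorem eq_of_forall_eq_rickerMap {ι : Type*} [Nonempty ι] {s δ : ℝ} {b I : ι → ℝ} (hs2 : s ≤ 2)
    (hδ : 0 < δ) (hb : ∀ i, δ ≤ b i) (hbI : ∀ i, b i = rickerMap s (I i))
    (hI : ∀ m M, (∀ i, b i ∈ Icc m M) → ∀ i, I i ∈ Icc m M) (i : ι) : b i = s := by
  set m := sInf (range b)
  set M := sSup (range b)
  have hbdd_below : BddBelow (range b) := ⟨δ, forall_mem_range.2 hb⟩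
  have hbdd_above : BddAbove (range b) :=
    ⟨exp (s - 1), forall_mem_range.2 fun i => hbI i ▸ rickerMap_le_exp_sub_one s (I i)⟩
  have hbmM : ∀ i, b i ∈ Icc m M := fun i =>
    ⟨csInf_le hbdd_below (mem_range_self i), le_csSup hbdd_above (mem_range_self i)⟩
  have hcover : Icc m M ⊆ rickerMap s '' Icc m M :=
    Icc_csInf_csSup_subset_image_Icc (continuous_rickerMap s) (range_nonempty b)
      (forall_mem_range.2 fun i => ⟨I i, hI m M hbmM i, (hbI i).symm⟩)
  have hm0 : 0 < m := hδ.trans_le (le_csInf (range_nonempty b) (forall_mem_range.2 hb))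
  obtain ⟨hm, hM⟩ := eq_of_Icc_subset_image_rickerMap hs2 hm0 ((hbmM i).1.trans (hbmM i).2) hcover
  exact le_antisymm (hM ▸ (hbmM i).2) (hm ▸ (hbmM i).1)

theorem integral_mul_mem_Icc {X : Type*} [MeasurableSpace X] {ν : Measure X} {w g : X → ℝ}
    {m M : ℝ} (hw : ∀ x, 0 ≤ w x) (hw1 : ∫ x, w x ∂ν = 1)
    (hwg : Integrable (fun x => w x * g x) ν) (hg : ∀ x, g x ∈ Icc m M) :
    ∫ x, w x * g x ∂ν ∈ Icc m M := by
  have hw_int : Integrable w ν := Integrable.of_integral_ne_zero (hw1 ▸ one_ne_zero)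
  have h_const : ∀ c, ∫ x, w x * c ∂ν = c := fun c => by rw [integral_mul_const, hw1, one_mul]
  constructor
  · calc m = ∫ x, w x * m ∂ν := (h_const m).symm
      _ ≤ ∫ x, w x * g x ∂ν := integral_mono (hw_int.mul_const m) hwg fun x =>
          mul_le_mul_of_nonneg_left (hg x).1 (hw x)
  · calc ∫ x, w x * g x ∂ν ≤ ∫ x, w x * M ∂ν := integral_mono hwg (hw_int.mul_const M) fun x =>
          mul_le_mul_of_nonneg_left (hg x).2 (hw x)
      _ = M := h_const M

theorem gurtin_maccamy_complete_orbit_rigidity_general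
    (μ α : ℝ) (hα1 : 1 < α) (hα2 : α ≤ Real.exp 2)
    (f : ℝ → ℝ) (hf : ∀ x, f x = x * Real.exp (-x))
    (β : ℝ → ℝ) (hβnonneg : ∀ a, 0 ≤ β a)
    (hβnorm : (∫ a in Set.Ioi (0:ℝ), β a * Real.exp (-μ * a)) = 1)
    (b : ℝ → ℝ)
    (hrenewal : ∀ t : ℝ,
      b t = α * f (∫ a in Set.Ioi (0:ℝ), β a * Real.exp (-μ * a) * b (t - a)))
    (δm : ℝ) (hδm : 0 < δm) (hblow : ∀ t : ℝ, δm ≤ b t) :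
    ∀ t : ℝ, b t = Real.log α := by
  have hα0 : 0 < α := one_pos.trans hα1
  have hbI : ∀ t, b t = rickerMap (log α) (∫ a in Ioi (0:ℝ), β a * exp (-μ * a) * b (t - a)) :=
    fun t => by rw [hrenewal t, hf, mul_mul_exp_neg_eq_rickerMap hα0]
  refine eq_of_forall_eq_rickerMap ((log_le_iff_le_exp hα0).2 hα2) hδm hblow hbI
    fun m M hb t => ?_
  -- the integral is not the junk value `0` of a non-integrable function, as `b t ≥ δm > 0`
  have hint : Integrable (fun a => β a * exp (-μ * a) * b (t - a)) (volume.restrict (Ioi 0)) :=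
    Integrable.of_integral_ne_zero fun h => by
      have := hblow t
      rw [hbI t, h, rickerMap_zero] at this
      linarith
  exact integral_mul_mem_Icc (fun a => mul_nonneg (hβnonneg a) (exp_pos _).le) hβnorm hint
    fun a => hb (t - a)

/-- Rigidity of bounded-below complete orbits: if `1 < α ≤ e²` and
`b` is a continuous solution of the renewal equation on `ℝ` with `b(t) ≥ δ⁻ > 0` for
all `t`, then `b ≡ ln α`. -/
theorem gurtin_maccamy_complete_orbit_rigidity
    (μ α : ℝ) (hμ : 0 < μ) (hα1 : 1 < α) (hα2 : α ≤ Real.exp 2)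
    (f : ℝ → ℝ) (hf : ∀ x, f x = x * Real.exp (-x))
    (β : ℝ → ℝ) (hβmeas : Measurable β) (hβnonneg : ∀ a, 0 ≤ β a)
    (hβbdd : ∃ C : ℝ, ∀ᵐ a ∂(volume.restrict (Set.Ioi 0)), β a ≤ C)
    (hβnorm : (∫ a in Set.Ioi (0:ℝ), β a * Real.exp (-μ * a)) = 1)
    (b : ℝ → ℝ) (hbcont : Continuous b)
    (hrenewal : ∀ t : ℝ,
      b t = α * f (∫ a in Set.Ioi (0:ℝ), β a * Real.exp (-μ * a) * b (t - a)))
    (δm : ℝ) (hδm : 0 < δm) (hblow : ∀ t : ℝ, δm ≤ b t) :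
    ∀ t : ℝ, b t = Real.log α :=
  gurtin_maccamy_complete_orbit_rigidity_general μ α hα1 hα2 f hf β hβnonneg hβnorm b hrenewal δm
    hδm hblow
end

section
/- Let α > e and ω > 0. Then Δ(iω, α) = 0 if and only if there exists k ∈ ℕ such that ωτ + (n+1)·arctan( ω/(μ+κ) ) = (2k+1)·π and α = exp( 1 + (1 + ω²/(μ+κ)²)^{(n+1)/2} ). In this case Δ(−iω, α) = 0 as well. -/
/-!
Write `x = ω/(μ+κ)`. Then `1 + iω/(μ+κ) = √(1+x²) e^{i arctan x}`, so `Δ(iω, α) = 0` says that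
`(1+x²)^{(n+1)/2} e^{i(n+1) arctan x} = (ln α - 1) e^{i(π - ωτ)}`, an equation between two
complex numbers in polar form whose moduli are positive because `α > e`. Equating moduli
determines `α`; equating arguments gives `ωτ + (n+1) arctan x ∈ π + 2πℤ`, and the integer is
nonnegative because the left side is positive. Since `Δ` has real coefficients,
`Δ(conj λ, α) = conj Δ(λ, α)`.
-/

open Complex ComplexConjugate

/-- `Δ(λ, α)` is `characteristic τ (μ + κ) (1 - ln α) (-(n + 1)) λ`. -/
noncomputable def characteristic (τ s c : ℝ) (m : ℤ) (lam : ℂ) : ℂ :=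
  1 - c * exp (-lam * τ) * (1 + lam / s) ^ m

theorem characteristic_conj (τ s c : ℝ) (m : ℤ) (lam : ℂ) :
    characteristic τ s c m (conj lam) = conj (characteristic τ s c m lam) := by
  simp [characteristic, ← exp_conj]

theorem ofReal_mul_exp_mul_I_eq_iff {a b u v : ℝ} (ha : 0 < a) (hb : 0 < b) :
    (a : ℂ) * exp (u * I) = b * exp (v * I) ↔ a = b ∧ ∃ k : ℤ, u = v + k * (2 * Real.pi) := by
  have hshift (k : ℤ) : ((v + k * (2 * Real.pi) : ℝ) : ℂ) * I = v * I + k * (2 * Real.pi * I) := by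
    push_cast; ring
  constructor
  · intro h
    have hab : a = b := by
      simpa [abs_of_pos ha, abs_of_pos hb] using congrArg (‖·‖) h
    subst hab
    obtain ⟨k, hk⟩ := exp_eq_exp_iff_exists_int.mp (mul_left_cancel₀ (by exact_mod_cast ha.ne') h)
    refine ⟨rfl, k, ?_⟩
    exact_mod_cast mul_right_cancel₀ I_ne_zero (hk.trans (hshift k).symm)
  · rintro ⟨rfl, k, rfl⟩
    rw [hshift, exp_add, exp_int_mul_two_pi_mul_I, mul_one]

theorem one_add_mul_I_eq_polar (x : ℝ) :
    1 + x * I = √(1 + x ^ 2) * exp (Real.arctan x * I) := by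
  have hr : (√(1 + x ^ 2) : ℂ) ≠ 0 := by exact_mod_cast (Real.sqrt_pos.mpr (by positivity)).ne'
  rw [exp_mul_I, ← ofReal_cos, ← ofReal_sin, Real.cos_arctan, Real.sin_arctan]
  push_cast
  field_simp

theorem one_add_mul_I_pow (x : ℝ) (m : ℕ) :
    (1 + x * I) ^ m = ((1 + x ^ 2) ^ ((m : ℝ) / 2) : ℝ) * exp ((m * Real.arctan x : ℝ) * I) := by
  rw [one_add_mul_I_eq_polar, mul_pow, ← exp_nat_mul, ← ofReal_pow, Real.sqrt_eq_rpow,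
    ← Real.rpow_mul_natCast (by positivity)]
  push_cast
  ring_nf

theorem exists_nat_eq_odd_mul_pi_iff {a : ℝ} (ha : 0 < a) :
    (∃ k : ℕ, a = (2 * k + 1) * Real.pi) ↔ ∃ k : ℤ, a = (2 * k + 1) * Real.pi := by
  refine ⟨fun ⟨k, hk⟩ => ⟨k, mod_cast hk⟩, fun ⟨k, hk⟩ => ⟨k.toNat, ?_⟩⟩
  have hk0 : 0 ≤ k := by
    by_contra! hneg
    have : (k : ℝ) ≤ -1 := by exact_mod_cast Int.le_sub_one_of_lt hneg
    nlinarith [Real.pi_pos]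
  rwa [← Int.cast_natCast, Int.toNat_of_nonneg hk0]

theorem characteristic_I_mul_eq_zero_iff (τ s ω L : ℝ) (m : ℕ) (hL : 1 < L) :
    characteristic τ s (1 - L) (-m) (I * ω) = 0 ↔
      (1 + ω ^ 2 / s ^ 2) ^ ((m : ℝ) / 2) = L - 1 ∧
        ∃ k : ℤ, ω * τ + m * Real.arctan (ω / s) = (2 * k + 1) * Real.pi := by
  have hz : 1 + I * ω / s = 1 + (ω / s : ℝ) * I := by push_cast; ring
  have hz0 : 1 + (ω / s : ℝ) * I ≠ 0 := fun h => by simpa using congrArg re h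
  have hrhs : (1 - L : ℝ) * exp (-(I * ω) * τ) = (L - 1 : ℝ) * exp ((Real.pi - ω * τ : ℝ) * I) := by
    rw [show ((Real.pi - ω * τ : ℝ) : ℂ) * I = Real.pi * I + -(I * ω) * τ by push_cast; ring,
      exp_add, exp_pi_mul_I]
    push_cast; ring
  rw [characteristic, sub_eq_zero, eq_comm, zpow_neg, zpow_natCast, hz,
    mul_inv_eq_one₀ (pow_ne_zero _ hz0), hrhs, eq_comm, one_add_mul_I_pow,
    ofReal_mul_exp_mul_I_eq_iff (by positivity) (by linarith), div_pow]
  exact and_congr_right fun _ => exists_congr fun k => by constructor <;> intro h <;> linarith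

/-- Purely imaginary characteristic roots: for `α > e` and `ω > 0`,
`Δ(iω, α) = 0` iff there is `k ∈ ℕ` with
`ωτ + (n+1) arctan(ω/(μ+κ)) = (2k+1)π` and
`α = exp(1 + (1 + ω²/(μ+κ)²)^{(n+1)/2})`; and in this case `Δ(-iω, α) = 0` too. -/
theorem characteristic_purely_imaginary_roots
    (μ τ κ : ℝ) (hμ : 0 < μ) (hτ : 0 < τ) (hκ : 0 < κ) (n : ℕ)
    (Δ : ℂ → ℝ → ℂ)
    (hΔ : ∀ (lam : ℂ) (a : ℝ),
      Δ lam a = 1 - ((1 : ℂ) - (Real.log a : ℂ)) * Complex.exp (-lam * (τ : ℂ))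
        * ((1 : ℂ) + lam / ((μ : ℂ) + (κ : ℂ))) ^ (-((n : ℤ) + 1)))
    (ω : ℝ) (hω : 0 < ω) (α : ℝ) (hα : Real.exp 1 < α) :
    (Δ (Complex.I * (ω : ℂ)) α = 0 ↔
      ∃ k : ℕ,
        ω * τ + ((n : ℝ) + 1) * Real.arctan (ω / (μ + κ)) = (2 * (k : ℝ) + 1) * Real.pi ∧
        α = Real.exp (1 + (1 + ω ^ 2 / (μ + κ) ^ 2) ^ (((n : ℝ) + 1) / 2))) ∧
    (Δ (Complex.I * (ω : ℂ)) α = 0 → Δ (-(Complex.I * (ω : ℂ))) α = 0) := by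
  have hα₀ : 0 < α := (Real.exp_pos 1).trans hα
  have hΔα (lam : ℂ) :
      Δ lam α = characteristic τ (μ + κ) (1 - Real.log α) (-((n + 1 : ℕ) : ℤ)) lam := by
    rw [hΔ, characteristic]
    push_cast
    ring_nf
  have hα_eq (y : ℝ) : α = Real.exp (1 + y) ↔ y = Real.log α - 1 := by
    constructor
    · rintro rfl
      rw [Real.log_exp]; ring
    · intro h
      rw [h, add_sub_cancel, Real.exp_log hα₀]
  refine ⟨?_, fun h => ?_⟩
  · rw [hΔα, characteristic_I_mul_eq_zero_iff _ _ _ _ _ ((Real.lt_log_iff_exp_lt hα₀).mpr hα),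
      ← exists_nat_eq_odd_mul_pi_iff (by positivity)]
    push_cast
    simp only [hα_eq, exists_and_right]
    exact and_comm
  · have hconj : -(I * (ω : ℂ)) = conj (I * ω) := by simp
    rw [hconj, hΔα, characteristic_conj, ← hΔα, h, map_zero]
end

section
/- Fix k ∈ ℕ, and for each n ∈ ℕ let ω_k(n) > 0 be the unique positive solution of ω·τ + (n+1)·arctan( ω/(μ+κ) ) = (2k+1)·π, and set α_k(n) = exp( 1 + (1 + ω_k(n)²/(μ+κ)²)^{(n+1)/2} ). Then the sequence n ↦ ω_k(n) is strictly decreasing, ω_k(n) → 0 as n → ∞, (n+1)·ω_k(n) → (2k+1)·π·(μ+κ) as n → ∞, and α_k(n) → e² as n → ∞. -/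
/-!
Write `a = μ + κ`, `c = (2k+1)π` and `θₙ = arctan (ωₙ / a) > 0`. If `ωₙ₊₁ ≥ ωₙ`, the left-hand
side of the equation would be strictly larger at `n + 1` than at `n`, so `ω` is strictly
decreasing. The equation gives `(n+1) θₙ ≤ c`, so `θₙ → 0` and `ωₙ = a tan θₙ → 0`; then
`(n+1) θₙ = c - τ ωₙ → c`, and `arctan x ~ x` at `0` turns this into `(n+1) ωₙ → c a`.
Consequently `(n+1) ωₙ² → 0`, and `1 ≤ (1 + x)^t ≤ e^{t x}` gives
`(1 + ωₙ² / a²)^{(n+1)/2} → 1`, whence `αₙ → e²`.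
-/

open Filter Topology Asymptotics Real

theorem isEquivalent_arctan_nhds_zero : arctan ~[𝓝 0] id := by
  have h := hasDerivAt_iff_isLittleO_nhds_zero.mp (by simpa using hasDerivAt_arctan (0 : ℝ))
  simp only [zero_add, arctan_zero, sub_zero, smul_eq_mul, mul_one] at h
  exact h

theorem tendsto_one_add_rpow_of_tendsto_mul {ι : Type*} {l : Filter ι} {x t : ι → ℝ}
    (hx : ∀ i, 0 ≤ x i) (ht : ∀ i, 0 ≤ t i) (h : Tendsto (fun i => t i * x i) l (𝓝 0)) :
    Tendsto (fun i => (1 + x i) ^ t i) l (𝓝 1) := by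
  have hupper : ∀ i, (1 + x i) ^ t i ≤ exp (t i * x i) := fun i => calc
    (1 + x i) ^ t i ≤ exp (x i) ^ t i :=
      rpow_le_rpow (by linarith [hx i]) (by linarith [add_one_le_exp (x i)]) (ht i)
    _ = exp (t i * x i) := by rw [← exp_mul, mul_comm]
  have hexp : Tendsto (fun i => exp (t i * x i)) l (𝓝 1) := by
    simpa only [exp_zero] using h.rexp
  exact tendsto_of_tendsto_of_tendsto_of_le_of_le tendsto_const_nhds hexp
    (fun i => one_le_rpow (by linarith [hx i]) (ht i)) hupper

section ArctanEquation

variable {a τ c : ℝ} {ω : ℕ → ℝ}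

theorem strictAnti_of_arctan_eq (ha : 0 < a) (hτ : 0 ≤ τ) (hω : ∀ n, 0 < ω n)
    (heq : ∀ n : ℕ, ω n * τ + ((n : ℝ) + 1) * arctan (ω n / a) = c) : StrictAnti ω := by
  refine strictAnti_nat_of_succ_lt fun n => lt_of_not_ge fun hle => ?_
  have harctan : arctan (ω n / a) ≤ arctan (ω (n + 1) / a) :=
    arctan_strictMono.monotone (by gcongr)
  have hpos : 0 < arctan (ω (n + 1) / a) := arctan_pos.mpr (div_pos (hω _) ha)
  have h₁ := heq n
  have h₂ := heq (n + 1)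
  push_cast at h₂
  nlinarith [mul_le_mul_of_nonneg_right hle hτ]

theorem tendsto_zero_of_arctan_eq (ha : 0 < a) (hτ : 0 ≤ τ) (hω : ∀ n, 0 < ω n)
    (heq : ∀ n : ℕ, ω n * τ + ((n : ℝ) + 1) * arctan (ω n / a) = c) :
    Tendsto ω atTop (𝓝 0) := by
  have hθ : Tendsto (fun n : ℕ => arctan (ω n / a)) atTop (𝓝 0) := by
    have hbound := tendsto_one_div_add_atTop_nhds_zero_nat.const_mul c
    rw [mul_zero] at hbound
    refine tendsto_of_tendsto_of_tendsto_of_le_of_le tendsto_const_nhds hbound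
      (fun n => (arctan_pos.mpr (div_pos (hω n) ha)).le) (fun n => ?_)
    rw [mul_one_div, le_div_iff₀' (by positivity)]
    linarith [heq n, mul_nonneg (hω n).le hτ]
  have htan : ContinuousAt tan 0 := continuousAt_tan.mpr (by simp)
  have hlim := (htan.tendsto.comp hθ).const_mul a
  simp only [tan_zero, mul_zero] at hlim
  refine hlim.congr fun n => ?_
  simp [Function.comp, tan_arctan, mul_div_cancel₀ _ ha.ne']

theorem tendsto_natCast_add_one_mul_of_arctan_eq (ha : a ≠ 0) (hω₀ : Tendsto ω atTop (𝓝 0))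
    (heq : ∀ n : ℕ, ω n * τ + ((n : ℝ) + 1) * arctan (ω n / a) = c) :
    Tendsto (fun n : ℕ => ((n : ℝ) + 1) * ω n) atTop (𝓝 (c * a)) := by
  have hlim : Tendsto (fun n : ℕ => ((n : ℝ) + 1) * arctan (ω n / a)) atTop (𝓝 c) := by
    have := (hω₀.mul_const τ).const_sub c
    rw [zero_mul, sub_zero] at this
    exact this.congr fun n => by linarith [heq n]
  have hquot : Tendsto (fun n => ω n / a) atTop (𝓝 0) := by simpa using hω₀.div_const a
  have hequiv : (fun n : ℕ => ((n : ℝ) + 1) * arctan (ω n / a)) ~[atTop]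
      fun n => ((n : ℝ) + 1) * (ω n / a) :=
    IsEquivalent.refl.mul (isEquivalent_arctan_nhds_zero.comp_tendsto hquot)
  refine ((hequiv.tendsto_nhds hlim).mul_const a).congr fun n => ?_
  field_simp

end ArctanEquation

/-- Fix `k ∈ ℕ` and for each `n ∈ ℕ` let `ω_k(n) > 0` be the unique
positive solution of `ωτ + (n+1) arctan(ω/(μ+κ)) = (2k+1)π`, and set
`α_k(n) = exp(1 + (1 + ω_k(n)²/(μ+κ)²)^{(n+1)/2})`.  Then `n ↦ ω_k(n)` is strictly
decreasing, `ω_k(n) → 0`, `(n+1) ω_k(n) → (2k+1)π(μ+κ)`, and `α_k(n) → e²` as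
`n → ∞`. -/
theorem characteristic_roots_limit_in_n
    (μ τ κ : ℝ) (hμ : 0 < μ) (hτ : 0 < τ) (hκ : 0 < κ) (k : ℕ)
    (ω : ℕ → ℝ) (hωpos : ∀ n, 0 < ω n)
    (hωeq : ∀ n : ℕ,
      ω n * τ + ((n : ℝ) + 1) * Real.arctan (ω n / (μ + κ))
        = (2 * (k : ℝ) + 1) * Real.pi)
    (α : ℕ → ℝ)
    (hα : ∀ n : ℕ,
      α n = Real.exp (1 + (1 + (ω n) ^ 2 / (μ + κ) ^ 2) ^ (((n : ℝ) + 1) / 2))) :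
    StrictAnti ω ∧
    Tendsto ω atTop (nhds 0) ∧
    Tendsto (fun n : ℕ => ((n : ℝ) + 1) * ω n) atTop
      (nhds ((2 * (k : ℝ) + 1) * Real.pi * (μ + κ))) ∧
    Tendsto α atTop (nhds (Real.exp 2)) := by
  have ha : 0 < μ + κ := add_pos hμ hκ
  have hω₀ := tendsto_zero_of_arctan_eq ha hτ.le hωpos hωeq
  have hnω := tendsto_natCast_add_one_mul_of_arctan_eq ha.ne' hω₀ hωeq
  have hexponent :
      Tendsto (fun n : ℕ => ((n : ℝ) + 1) / 2 * (ω n ^ 2 / (μ + κ) ^ 2)) atTop (𝓝 0) := by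
    have := hnω.mul (hω₀.div_const (2 * (μ + κ) ^ 2))
    rw [zero_div, mul_zero] at this
    exact this.congr fun n => by field_simp
  have hpow := tendsto_one_add_rpow_of_tendsto_mul
    (fun n => by positivity) (fun n => by positivity) hexponent
  refine ⟨strictAnti_of_arctan_eq ha hτ.le hωpos hωeq, hω₀, hnω, ?_⟩
  have hα₀ := (hpow.const_add 1).rexp
  rw [one_add_one_eq_two] at hα₀
  exact hα₀.congr fun n => (hα n).symm
end
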